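/- arXiv:1711.09948 — 8 statements merged into one kernel-verified Lean document; each statement's English description precedes it below -/
import Mathlib

section
/- (Remark 1.2(2).) Let U ⊆ ℝⁿ be open, V : U → ℝⁿ a real-analytic vector field, and X ⊆ U. Assume the triple (U, V, X) is transverse, i.e. for every q ∈ X there exist an open neighborhood W ⊆ U of q and a real-analytic function f : W → ℝ such that X ∩ W ⊆ f⁻¹(0) and (fderiv f q)(V(q)) ≠ 0. Then for every compact set K ⊆ X there exists δ > 0 such that for every p ∈ K and every integral curve γ : I → U of V with 0 ∈ I ⊆ (−δ, δ) and γ(0) = p, one has γ(t) ∉ X for all t ∈ I with t ≠ 0. -/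
/-!
Near a point `q` of `X` put `c = Df(q) V(q) ≠ 0`. On a small ball around `q` the speed `‖V‖` is
below some `M` and `Df(x) V(x)` stays within `|c| / 2` of `c`. An integral curve starting in the
half ball cannot leave the ball before time `R / (2M)`, and up to then `(f ∘ γ)'` stays within
`|c| / 2` of `c`, so `f ∘ γ` is injective; as `f` vanishes on `X`, the curve meets `X` only at
time `0`. Compactness of `K` makes the time uniform.
-/

open Metric Set Filter Topology

theorem injOn_of_hasDerivWithinAt_of_dist_le {g g' : ℝ → ℝ} {I : Set ℝ} {c ε : ℝ}
    (hI : I.OrdConnected) (hg : ∀ t ∈ I, HasDerivWithinAt g (g' t) I t)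
    (hg' : ∀ t ∈ I, dist (g' t) c ≤ ε) (hε : ε < |c|) : InjOn g I := by
  intro s hs t ht hst
  have hmvt := Convex.norm_image_sub_le_of_norm_hasDerivWithin_le (f := fun u ↦ g u - c * u)
    (fun u hu ↦ (hg u hu).sub (by simpa using (hasDerivWithinAt_id u I).const_mul c))
    (fun u hu ↦ hg' u hu) hI.convex hs ht
  have : |c| * |t - s| ≤ ε * |t - s| := by
    simpa [hst, ← mul_sub, abs_mul, abs_sub_comm s t, Real.norm_eq_abs] using hmvt
  by_contra hne
  have := abs_pos.2 (sub_ne_zero.2 (Ne.symm hne))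
  nlinarith

section FlowBox

variable {E : Type*} [NormedAddCommGroup E] [NormedSpace ℝ E]

theorem dist_le_mul_of_norm_hasDerivWithinAt_lt_of_le {γ v : ℝ → E} {I : Set ℝ}
    (hI : I.OrdConnected) {a t M r : ℝ} (ha : a ∈ I) (ht : t ∈ I) (hat : a ≤ t)
    (hM : 0 ≤ M) (hγ : ∀ s ∈ I, HasDerivWithinAt γ (v s) I s)
    (hv : ∀ s ∈ I, γ s ∈ closedBall (γ a) r → ‖v s‖ < M) (htr : M * (t - a) ≤ r) :
    dist (γ t) (γ a) ≤ M * (t - a) := by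
  have hsub : Icc a t ⊆ I := hI.out ha ht
  rw [dist_eq_norm]
  -- fence `‖γ s - γ a‖ ≤ M (s - a)`: on the fence the curve is in the ball, so its speed is `< M`
  refine image_norm_le_of_norm_deriv_right_lt_deriv_boundary (f := fun s ↦ γ s - γ a)
    (B := fun s ↦ M * (s - a)) (B' := fun _ ↦ M)
    (fun s hs ↦ ((hγ s (hsub hs)).continuousWithinAt.mono hsub).sub continuousWithinAt_const)
    (fun s hs ↦ ((hγ s (hsub (Ico_subset_Icc_self hs))).mono_of_mem_nhdsWithin
      (mem_of_superset (Icc_mem_nhdsGE hs.2) (hI.out (hsub (Ico_subset_Icc_self hs)) ht))).sub_const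
      (γ a))
    (by simp) (fun s ↦ by simpa using ((hasDerivAt_id s).sub_const a).const_mul M)
    (fun s hs hs_eq ↦ hv s (hsub (Ico_subset_Icc_self hs)) ?_) ⟨hat, le_rfl⟩
  rw [mem_closedBall, dist_eq_norm, hs_eq]
  nlinarith [hs.2]

theorem dist_le_mul_of_norm_hasDerivWithinAt_lt {γ v : ℝ → E} {I : Set ℝ}
    (hI : I.OrdConnected) {a t M r : ℝ} (ha : a ∈ I) (ht : t ∈ I) (hM : 0 ≤ M)
    (hγ : ∀ s ∈ I, HasDerivWithinAt γ (v s) I s)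
    (hv : ∀ s ∈ I, γ s ∈ closedBall (γ a) r → ‖v s‖ < M) (htr : M * |t - a| ≤ r) :
    dist (γ t) (γ a) ≤ M * |t - a| := by
  rcases le_total a t with hat | hta
  · rw [abs_of_nonneg (sub_nonneg.2 hat)] at htr ⊢
    exact dist_le_mul_of_norm_hasDerivWithinAt_lt_of_le hI ha ht hat hM hγ hv htr
  · rw [abs_of_nonpos (sub_nonpos.2 hta), neg_sub] at htr ⊢
    have hγ' : ∀ s ∈ Neg.neg ⁻¹' I,
        HasDerivWithinAt (fun s ↦ γ (-s)) (-v (-s)) (Neg.neg ⁻¹' I) s := fun s hs ↦ by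
      simpa [Function.comp_def] using
        (hγ (-s) hs).scomp s (hasDerivWithinAt_neg s _) (mapsTo_preimage _ _)
    have h := dist_le_mul_of_norm_hasDerivWithinAt_lt_of_le
      (hI.preimage_anti fun _ _ ↦ neg_le_neg) (a := -a) (t := -t) (by simpa) (by simpa)
      (neg_le_neg hta) hM hγ'
      (fun s hs hs' ↦ by simpa using hv (-s) hs (by simpa using hs'))
      (by rwa [neg_sub_neg])
    simpa only [neg_neg, neg_sub_neg] using h

def NoReturnWithin (V : E → E) (X : Set E) (δ : ℝ) (p : E) : Prop :=
  ∀ (I : Set ℝ) (γ : ℝ → E), I.OrdConnected → (0 : ℝ) ∈ I → I ⊆ Ioo (-δ) δ →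
    (∀ t ∈ I, HasDerivWithinAt γ (V (γ t)) I t) → γ 0 = p → ∀ t ∈ I, t ≠ 0 → γ t ∉ X

variable {V : E → E} {X : Set E}

theorem NoReturnWithin.mono {δ δ' : ℝ} {p : E} (h : NoReturnWithin V X δ p) (hδ : δ' ≤ δ) :
    NoReturnWithin V X δ' p :=
  fun I γ hI h0 hIδ ↦ h I γ hI h0 (hIδ.trans (Ioo_subset_Ioo (neg_le_neg hδ) hδ))

theorem noReturnWithin_of_forall_mem_ball {f : E → ℝ} {q p : E} {R M c ε : ℝ}
    (hf : ∀ x ∈ ball q R, DifferentiableAt ℝ f x) (hV : ∀ x ∈ ball q R, ‖V x‖ < M)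
    (hfV : ∀ x ∈ ball q R, dist (fderiv ℝ f x (V x)) c ≤ ε) (hε : ε < |c|)
    (hfX : ∀ x ∈ ball q R, x ∈ X → f x = 0) (hp : p ∈ ball q (R / 2)) (hpX : p ∈ X) :
    NoReturnWithin V X (R / (2 * M)) p := by
  have hR : 0 < R := by linarith [pos_of_mem_ball hp]
  have hpq : p ∈ ball q R := ball_subset_ball (by linarith) hp
  have hM : 0 < M := (norm_nonneg _).trans_lt (hV p hpq)
  have hsub : closedBall p (R / 2) ⊆ ball q R :=
    closedBall_subset_ball' (by linarith [mem_ball.1 hp])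
  intro I γ hI h0 hIδ hγ hγ0 t ht ht0 hγt
  have hstay : ∀ u ∈ I, γ u ∈ ball q R := by
    intro u hu
    have hMu : M * |u - 0| ≤ R / 2 := by
      have := (lt_div_iff₀ (by positivity)).1 (abs_lt.2 (hIδ hu))
      rw [sub_zero]
      linarith
    refine hsub (mem_closedBall.2 ?_)
    rw [← hγ0]
    exact (dist_le_mul_of_norm_hasDerivWithinAt_lt hI h0 hu hM.le hγ
      (fun s _ hs ↦ hV _ (hsub (hγ0 ▸ hs))) hMu).trans hMu
  have hinj : InjOn (f ∘ γ) I := injOn_of_hasDerivWithinAt_of_dist_le hI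
    (fun u hu ↦ (hf _ (hstay u hu)).hasFDerivAt.comp_hasDerivWithinAt u (hγ u hu))
    (fun u hu ↦ hfV _ (hstay u hu)) hε
  refine ht0 (hinj ht h0 ?_)
  simp only [Function.comp_apply, hfX _ (hstay t ht) hγt, hγ0, hfX p hpq hpX]

theorem exists_pos_eventually_noReturnWithin {f : E → ℝ} {q : E} (hV : ContinuousAt V q)
    (hf : ∀ᶠ x in 𝓝 q, DifferentiableAt ℝ f x)
    (hfV : ContinuousAt (fun x ↦ fderiv ℝ f x (V x)) q)
    (hfX : ∀ᶠ x in 𝓝 q, x ∈ X → f x = 0) (hq : fderiv ℝ f q (V q) ≠ 0) :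
    ∃ δ > 0, ∀ᶠ p in 𝓝 q, p ∈ X → NoReturnWithin V X δ p := by
  have hc : 0 < |fderiv ℝ f q (V q)| := abs_pos.2 hq
  obtain ⟨R, hR, hball⟩ := Metric.eventually_nhds_iff_ball.1 <| hf.and <|
    (hV.norm.eventually (gt_mem_nhds (lt_add_one ‖V q‖))).and <|
    (hfV.eventually (closedBall_mem_nhds _ (half_pos hc))).and hfX
  refine ⟨R / (2 * (‖V q‖ + 1)), by positivity,
    eventually_of_mem (ball_mem_nhds q (half_pos hR)) fun p hp hpX ↦ ?_⟩
  exact noReturnWithin_of_forall_mem_ball (fun x hx ↦ (hball x hx).1)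
    (fun x hx ↦ (hball x hx).2.1) (fun x hx ↦ (hball x hx).2.2.1) (half_lt_self hc)
    (fun x hx ↦ (hball x hx).2.2.2) hp hpX

end FlowBox

theorem IsCompact.exists_pos_forall_of_antitone {α : Type*} [TopologicalSpace α] {K : Set α}
    (hK : IsCompact K) {P : ℝ → α → Prop} (hP : ∀ p, Antitone (P · p))
    (hloc : ∀ q ∈ K, ∃ δ > 0, ∀ᶠ p in 𝓝 q, P δ p) :
    ∃ δ > 0, ∀ p ∈ K, P δ p := by
  have h : ∀ᶠ δ in 𝓝 (0 : ℝ), ∀ p ∈ K, P δ p :=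
    hK.eventually_forall_of_forall_eventually fun q hq ↦ by
      obtain ⟨δ, hδ, hp⟩ := hloc q hq
      exact ((eventually_lt_nhds hδ).prodMk_nhds hp).mono fun z hz ↦ hP z.2 hz.1.le hz.2
  obtain ⟨δ, hδ, hδK⟩ := (eventually_mem_nhdsWithin.and (nhdsWithin_le_nhds h)).exists
    (f := 𝓝[>] (0 : ℝ))
  exact ⟨δ, hδ, hδK⟩

theorem remark_transverse_implies_flow_box_property_general
    (n : ℕ)
    (U : Set (Fin n → ℝ))
    (V : (Fin n → ℝ) → (Fin n → ℝ)) (hV : AnalyticOnNhd ℝ V U)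
    (X : Set (Fin n → ℝ))
    (htrans : ∀ q ∈ X, ∃ (W : Set (Fin n → ℝ)) (f : (Fin n → ℝ) → ℝ),
      IsOpen W ∧ q ∈ W ∧ W ⊆ U ∧ AnalyticOnNhd ℝ f W ∧
      (X ∩ W ⊆ f ⁻¹' {0}) ∧ fderiv ℝ f q (V q) ≠ 0) :
    ∀ K ⊆ X, IsCompact K →
      ∃ δ > (0 : ℝ), ∀ p ∈ K, ∀ (I : Set ℝ) (γ : ℝ → (Fin n → ℝ)),
        I.OrdConnected → (0 : ℝ) ∈ I → I ⊆ Set.Ioo (-δ) δ →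
        (∀ t ∈ I, γ t ∈ U) →
        (∀ t ∈ I, HasDerivWithinAt γ (V (γ t)) I t) →
        γ 0 = p →
        ∀ t ∈ I, t ≠ 0 → γ t ∉ X := by
  intro K hKX hK
  obtain ⟨δ, hδ, hKδ⟩ := hK.exists_pos_forall_of_antitone
    (P := fun δ p ↦ p ∈ X → NoReturnWithin V X δ p)
    (fun _ _ _ hδ h hpX ↦ (h hpX).mono hδ) fun q hq ↦ by
      obtain ⟨W, f, hW, hqW, hWU, hf, hfX, hq⟩ := htrans q (hKX hq)
      have hWq : W ∈ 𝓝 q := hW.mem_nhds hqW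
      have hVq : ContinuousAt V q := (hV q (hWU hqW)).continuousAt
      exact exists_pos_eventually_noReturnWithin hVq
        (eventually_of_mem hWq fun x hx ↦ (hf x hx).differentiableAt)
        ((hf.fderiv q hqW).continuousAt.clm_apply hVq)
        (eventually_of_mem hWq fun x hx hxX ↦ hfX ⟨hxX, hx⟩) hq
  exact ⟨δ, hδ, fun p hp I γ hI h0 hIδ _ ↦ hKδ p hp (hKX hp) I γ hI h0 hIδ⟩

/-- **Remark 1.2(2).** If the triple `(U, V, X)` is transverse, then for every compact
`K ⊆ X` there is `δ > 0` such that every integral curve of `V` starting at a point of `K`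
at time `0` does not return to `X` within time `δ`. -/
theorem remark_transverse_implies_flow_box_property
    (n : ℕ)
    (U : Set (Fin n → ℝ)) (hU : IsOpen U)
    (V : (Fin n → ℝ) → (Fin n → ℝ)) (hV : AnalyticOnNhd ℝ V U)
    (X : Set (Fin n → ℝ)) (hXU : X ⊆ U)
    (htrans : ∀ q ∈ X, ∃ (W : Set (Fin n → ℝ)) (f : (Fin n → ℝ) → ℝ),
      IsOpen W ∧ q ∈ W ∧ W ⊆ U ∧ AnalyticOnNhd ℝ f W ∧
      (X ∩ W ⊆ f ⁻¹' {0}) ∧ fderiv ℝ f q (V q) ≠ 0) :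
    ∀ K ⊆ X, IsCompact K →
      ∃ δ > (0 : ℝ), ∀ p ∈ K, ∀ (I : Set ℝ) (γ : ℝ → (Fin n → ℝ)),
        I.OrdConnected → (0 : ℝ) ∈ I → I ⊆ Set.Ioo (-δ) δ →
        (∀ t ∈ I, γ t ∈ U) →
        (∀ t ∈ I, HasDerivWithinAt γ (V (γ t)) I t) →
        γ 0 = p →
        ∀ t ∈ I, t ≠ 0 → γ t ∉ X :=
  remark_transverse_implies_flow_box_property_general n U V hV X htrans
end

section
/- (Theorem 1.7, analytic quasi-transversality implies generalized Flow-Box.) Let U ⊆ ℝⁿ be open, V : U → ℝⁿ a real-analytic vector field, f₁, …, f_k : U → ℝ real-analytic, and X = {q ∈ U : f₁(q) = ⋯ = f_k(q) = 0}. For a differentiable function f write V·f for the function q ↦ (fderiv f q)(V(q)). Assume: (i) f₁, …, f_k locally generate the ideal of X: for every q ∈ X, every open W ⊆ U containing q and every real-analytic g : W → ℝ vanishing on X ∩ W, there exist an open neighborhood W' ⊆ W of q and real-analytic a₁,…,a_k : W' → ℝ with g = Σᵢ aᵢ·fᵢ on W'; (ii) the triple (U, V, X) is geometrically quasi-transverse: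 for every q ∈ X with V(q) ≠ 0 there exist an open neighborhood W ⊆ U of q and a real-analytic f : W → ℝ such that X ∩ W ⊆ f⁻¹(0) and (fderiv f q)(V(q)) ≠ 0; (iii) analytic quasi-transversality: there exist real-analytic functions a_{ij}, b_{ij} : U → ℝ (1 ≤ i, j ≤ k) with V·(V·fᵢ) = Σⱼ a_{ij}·fⱼ + Σⱼ b_{ij}·(V·fⱼ) on U for every i. Then (U, V, X) satisfies the generalized Flow-Box property: for every compact K ⊆ X there exists δ > 0 such that for every p ∈ K with V(p) ≠ 0 and every integral curve γ : I → U of V with 0 ∈ I ⊆ (−δ, δ) and γ(0) = p, one has γ(t) ∉ X for all t ∈ I with t ≠ 0. -/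
/-!
If `p ∈ X` and `V p ≠ 0`, conditions (i) and (ii) force some `V·fᵢ` to be nonzero at `p`.
Along an integral curve `γ`, the vectors `P = (fᵢ ∘ γ)ᵢ` and `Q = ((V·fᵢ) ∘ γ)ᵢ` satisfy
`P' = Q` and, by (iii), `Q' = A P + B Q`, where the coefficients are bounded on a compact
neighbourhood of `K` that `γ` cannot leave in short time. If `P` vanished at `0` and at some
`t₀ ≠ 0`, then on the short interval between them the mean value inequality would bound
`sup ‖Q‖` by a small multiple of itself, so `Q = 0`, contradicting `Q 0 ≠ 0`.
-/

open Set Metric Filter Topology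

theorem abs_sum_mul_le {ι : Type*} [Fintype ι] {c x : ι → ℝ} {C : ℝ} (hc : ∀ j, |c j| ≤ C) :
    |∑ j, c j * x j| ≤ Fintype.card ι * C * ‖x‖ :=
  calc |∑ j, c j * x j|
    _ ≤ ∑ j, |c j| * |x j| := by
      simpa only [abs_mul] using Finset.abs_sum_le_sum_abs (fun j => c j * x j) Finset.univ
    _ ≤ ∑ _j : ι, C * ‖x‖ := by
      gcongr with j
      · exact (abs_nonneg _).trans (hc j)
      · exact hc j
      · exact norm_le_pi_norm x j
    _ = Fintype.card ι * C * ‖x‖ := by simp [mul_assoc]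

theorem IsCompact.exists_nonneg_forall_abs_le {α ι : Type*} [TopologicalSpace α] [Fintype ι]
    {L : Set α} (hL : IsCompact L) {g : ι → α → ℝ} (hg : ∀ i, ContinuousOn (g i) L) :
    ∃ C, 0 ≤ C ∧ ∀ i, ∀ x ∈ L, |g i x| ≤ C := by
  obtain ⟨C, hC⟩ := hL.exists_bound_of_continuousOn (continuousOn_pi.2 hg)
  exact ⟨max C 0, le_max_right _ _, fun i x hx =>
    ((norm_le_pi_norm (fun i => g i x) i).trans (hC x hx)).trans (le_max_left _ _)⟩

section

variable {E : Type*} [NormedAddCommGroup E] [NormedSpace ℝ E]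

theorem deriv_eqOn_zero_of_second_order_bound {P Q Θ : ℝ → E} {a b C : ℝ}
    (hab : a < b) (hC : 0 ≤ C)
    (hP : ∀ t ∈ Icc a b, HasDerivWithinAt P (Q t) (Icc a b) t)
    (hQ : ∀ t ∈ Icc a b, HasDerivWithinAt Q (Θ t) (Icc a b) t)
    (hΘ : ∀ t ∈ Icc a b, ‖Θ t‖ ≤ C * (‖P t‖ + ‖Q t‖))
    (ha : P a = 0) (hb : P b = 0) (hsmall : 2 * C * (b - a + 1) * (b - a) < 1) :
    EqOn Q 0 (Icc a b) := by
  set τ := b - a with hτdef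
  have hτ : 0 < τ := sub_pos.2 hab
  obtain ⟨s, hs, hmax⟩ := isCompact_Icc.exists_isMaxOn (nonempty_Icc.2 hab.le)
    (fun t ht => (hQ t ht).continuousWithinAt.norm)
  set M := ‖Q s‖
  have hM : 0 ≤ M := norm_nonneg _
  have hQM : ∀ t ∈ Icc a b, ‖Q t‖ ≤ M := fun t ht => hmax ht
  have hPM : ∀ t ∈ Icc a b, ‖P t‖ ≤ M * τ := by
    intro t ht
    have := norm_image_sub_le_of_norm_deriv_le_segment' hP
      (fun t ht => hQM t (Ico_subset_Icc_self ht)) t ht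
    rw [ha, sub_zero] at this
    exact this.trans (by gcongr; linarith [ht.2])
  set D := C * (τ + 1) * M
  have hΘD : ∀ t ∈ Icc a b, ‖Θ t‖ ≤ D := fun t ht =>
    calc ‖Θ t‖ ≤ C * (‖P t‖ + ‖Q t‖) := hΘ t ht
      _ ≤ C * (M * τ + M) := by gcongr <;> [exact hPM t ht; exact hQM t ht]
      _ = D := by ring
  have hQQa : ∀ t ∈ Icc a b, ‖Q t - Q a‖ ≤ D * τ := by
    intro t ht
    have := norm_image_sub_le_of_norm_deriv_le_segment' hQ
      (fun t ht => hΘD t (Ico_subset_Icc_self ht)) t ht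
    exact this.trans (by gcongr; linarith [ht.2])
  -- Taylor at `a`: `t ↦ P t - (t - a) • Q a` vanishes at `a` and equals `-τ • Q a` at `b`.
  have hQa : τ * ‖Q a‖ ≤ D * τ * τ := by
    have hR : ∀ t ∈ Icc a b,
        HasDerivWithinAt (fun t => P t - (t - a) • Q a) (Q t - Q a) (Icc a b) t := fun t ht => by
      simpa using
        (hP t ht).fun_sub (((hasDerivAt_id t).sub_const a).smul_const (Q a)).hasDerivWithinAt
    have := norm_image_sub_le_of_norm_deriv_le_segment' hR
      (fun t ht => hQQa t (Ico_subset_Icc_self ht)) b (right_mem_Icc.2 hab.le)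
    simpa [ha, hb, norm_smul, abs_of_pos hτ, ← hτdef] using this
  have hMM : M ≤ 2 * C * (τ + 1) * τ * M :=
    calc M ≤ ‖Q a‖ + ‖Q s - Q a‖ := norm_le_norm_add_norm_sub' _ _
      _ ≤ D * τ + D * τ := add_le_add (le_of_mul_le_mul_left (by linarith) hτ) (hQQa s hs)
      _ = 2 * C * (τ + 1) * τ * M := by ring
  have hM0 : M ≤ 0 := by nlinarith
  exact fun t ht => norm_le_zero_iff.1 ((hQM t ht).trans hM0)

theorem dist_le_mul_of_norm_deriv_lt {γ v : ℝ → E} {b C : ℝ}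
    (hγ : ∀ t ∈ Icc 0 b, HasDerivWithinAt γ (v t) (Icc 0 b) t)
    (hv : ∀ t ∈ Icc 0 b, dist (γ t) (γ 0) ≤ C * t → ‖v t‖ < C) :
    ∀ t ∈ Icc 0 b, dist (γ t) (γ 0) ≤ C * t := by
  simp_rw [dist_eq_norm] at hv ⊢
  refine image_norm_le_of_norm_deriv_right_lt_deriv_boundary
    (fun t ht => (hγ t ht).continuousWithinAt.sub continuousWithinAt_const)
    (fun t ht => ((hγ t (Ico_subset_Icc_self ht)).sub_const (γ 0)).mono_of_mem_nhdsWithin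
      (Icc_mem_nhdsGE_of_mem ht))
    (by simp) (fun t => by simpa using (hasDerivAt_id t).const_mul C)
    (fun t ht h => hv t (Ico_subset_Icc_self ht) h.le)

theorem dist_le_mul_abs_of_norm_deriv_lt {γ v : ℝ → E} {c C : ℝ}
    (hγ : ∀ t ∈ uIcc 0 c, HasDerivWithinAt γ (v t) (uIcc 0 c) t)
    (hv : ∀ t ∈ uIcc 0 c, dist (γ t) (γ 0) ≤ C * |t| → ‖v t‖ < C) :
    ∀ t ∈ uIcc 0 c, dist (γ t) (γ 0) ≤ C * |t| := by
  rcases le_total 0 c with hc | hc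
  · rw [uIcc_of_le hc] at hγ hv ⊢
    intro t ht
    rw [abs_of_nonneg ht.1]
    exact dist_le_mul_of_norm_deriv_lt hγ
      (fun s hs h => hv s hs (by rwa [abs_of_nonneg hs.1])) t ht
  · rw [uIcc_of_ge hc] at hγ hv ⊢
    have hneg : ∀ {t : ℝ}, t ∈ Icc 0 (-c) ↔ -t ∈ Icc c 0 := by
      intro t
      rw [neg_mem_Icc_iff, neg_zero]
    have hrev : ∀ t ∈ Icc 0 (-c),
        HasDerivWithinAt (fun t => γ (-t)) (-v (-t)) (Icc 0 (-c)) t := fun t ht => by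
      simpa [Function.comp_def] using
        (hγ (-t) (hneg.1 ht)).scomp t (hasDerivAt_neg t).hasDerivWithinAt fun s hs => hneg.1 hs
    intro t ht
    have := dist_le_mul_of_norm_deriv_lt hrev
      (fun s hs h => by simpa using hv (-s) (hneg.1 hs) (by simpa [abs_of_nonneg hs.1] using h))
      (-t) (hneg.2 (by simpa using ht))
    simpa [abs_of_nonpos ht.2] using this

theorem mem_cthickening_of_hasDerivWithinAt {K : Set E} {V : E → E} {γ : ℝ → E} {r CV c : ℝ}
    (hV : ∀ x ∈ cthickening r K, ‖V x‖ ≤ CV) (hγ0 : γ 0 ∈ K)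
    (hγ : ∀ t ∈ uIcc 0 c, HasDerivWithinAt γ (V (γ t)) (uIcc 0 c) t) (hc : (CV + 1) * |c| ≤ r) :
    ∀ t ∈ uIcc 0 c, γ t ∈ cthickening r K := by
  have hCV : 0 ≤ CV := (norm_nonneg _).trans (hV _ (self_subset_cthickening K hγ0))
  have hnear : ∀ t ∈ uIcc 0 c, dist (γ t) (γ 0) ≤ (CV + 1) * |t| → γ t ∈ cthickening r K :=
    fun t ht h => mem_cthickening_of_dist_le _ _ r K hγ0
      (h.trans (mul_le_mul_of_nonneg_left (by simpa using abs_sub_left_of_mem_uIcc ht)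
        (by linarith)) |>.trans hc)
  exact fun t ht => hnear t ht (dist_le_mul_abs_of_norm_deriv_lt hγ
    (fun s hs h => (hV _ (hnear s hs h)).trans_lt (lt_add_one CV)) t ht)

/-- The paper's `V·g`. -/
noncomputable def lieDeriv (V : E → E) (g : E → ℝ) (x : E) : ℝ := fderiv ℝ g x (V x)

theorem AnalyticAt.differentiableAt_lieDeriv {V : E → E} {g : E → ℝ} {x : E}
    (hg : AnalyticAt ℝ g x) (hV : DifferentiableAt ℝ V x) :
    DifferentiableAt ℝ (lieDeriv V g) x :=
  hg.fderiv.differentiableAt.clm_apply hV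

theorem HasDerivWithinAt.comp_lieDeriv {V : E → E} {g : E → ℝ} {γ : ℝ → E} {s : Set ℝ} {t : ℝ}
    (hγ : HasDerivWithinAt γ (V (γ t)) s t) (hg : DifferentiableAt ℝ g (γ t)) :
    HasDerivWithinAt (fun t => g (γ t)) (lieDeriv V g (γ t)) s t :=
  hg.hasFDerivAt.comp_hasDerivWithinAt t hγ

theorem lieDeriv_eq_zero_of_eventuallyEq_sum_mul {ι : Type*} [Fintype ι] {V : E → E} {g : E → ℝ}
    {c f : ι → E → ℝ} {p : E} (hg : g =ᶠ[𝓝 p] fun x => ∑ i, c i x * f i x)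
    (hc : ∀ i, DifferentiableAt ℝ (c i) p) (hf : ∀ i, DifferentiableAt ℝ (f i) p)
    (hf₀ : ∀ i, f i p = 0) (hVf : ∀ i, lieDeriv V (f i) p = 0) : lieDeriv V g p = 0 := by
  have := (HasFDerivAt.fun_sum fun i _ => (hc i).hasFDerivAt.mul (hf i).hasFDerivAt)
    |>.congr_of_eventuallyEq hg
  simp only [lieDeriv] at hVf ⊢
  simp [this.fderiv, hf₀, hVf]

def GeometricallyQuasiTransverse (U : Set E) (V : E → E) (X : Set E) : Prop :=
  ∀ q ∈ X, V q ≠ 0 → ∃ (W : Set E) (g : E → ℝ),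
    IsOpen W ∧ q ∈ W ∧ W ⊆ U ∧ AnalyticOnNhd ℝ g W ∧ X ∩ W ⊆ g ⁻¹' {0} ∧ lieDeriv V g q ≠ 0

def LocallyGeneratesIdeal {ι : Type*} [Fintype ι] (f : ι → E → ℝ) (U X : Set E) : Prop :=
  ∀ q ∈ X, ∀ W : Set E, IsOpen W → q ∈ W → W ⊆ U →
    ∀ g : E → ℝ, AnalyticOnNhd ℝ g W → (∀ x ∈ X ∩ W, g x = 0) →
    ∃ (W' : Set E) (a : ι → E → ℝ), IsOpen W' ∧ q ∈ W' ∧ W' ⊆ W ∧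
      (∀ i, AnalyticOnNhd ℝ (a i) W') ∧ ∀ x ∈ W', g x = ∑ i, a i x * f i x

theorem GeometricallyQuasiTransverse.exists_lieDeriv_ne_zero {ι : Type*} [Fintype ι]
    {U X : Set E} {V : E → E} {f : ι → E → ℝ} (hqt : GeometricallyQuasiTransverse U V X)
    (hgen : LocallyGeneratesIdeal f U X) (hf : ∀ i, AnalyticOnNhd ℝ (f i) U) (hXU : X ⊆ U)
    (hfX : ∀ q ∈ X, ∀ i, f i q = 0) {p : E} (hp : p ∈ X) (hVp : V p ≠ 0) :
    ∃ i, lieDeriv V (f i) p ≠ 0 := by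
  by_contra! hVf
  obtain ⟨W, g, hW, hpW, hWU, hg, hgX, hgV⟩ := hqt p hp hVp
  obtain ⟨W', c, hW', hpW', -, hc, hgc⟩ := hgen p hp W hW hpW hWU g hg fun x hx => hgX hx
  exact hgV (lieDeriv_eq_zero_of_eventuallyEq_sum_mul (eventually_of_mem (hW'.mem_nhds hpW') hgc)
    (fun i => (hc i p hpW').differentiableAt) (fun i => (hf i p (hXU hp)).differentiableAt)
    (hfX p hp) hVf)

theorem lieDeriv_comp_eq_zero_of_vanishing_at_ends {ι : Type*} [Fintype ι] {U L : Set E}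
    {V : E → E} {f : ι → E → ℝ} {A B : ι → ι → E → ℝ} {γ : ℝ → E} {a b C : ℝ}
    (hV : AnalyticOnNhd ℝ V U) (hf : ∀ i, AnalyticOnNhd ℝ (f i) U)
    (hAB : ∀ i, ∀ q ∈ U, lieDeriv V (lieDeriv V (f i)) q =
      ∑ j, A i j q * f j q + ∑ j, B i j q * lieDeriv V (f j) q)
    (hLU : L ⊆ U) (hC : 0 ≤ C) (hA : ∀ x ∈ L, ∀ i j, |A i j x| ≤ C)
    (hB : ∀ x ∈ L, ∀ i j, |B i j x| ≤ C)
    (hab : a < b) (hγL : ∀ t ∈ Icc a b, γ t ∈ L)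
    (hγ : ∀ t ∈ Icc a b, HasDerivWithinAt γ (V (γ t)) (Icc a b) t)
    (ha : ∀ i, f i (γ a) = 0) (hb : ∀ i, f i (γ b) = 0)
    (hsmall : 2 * (Fintype.card ι * C) * (b - a + 1) * (b - a) < 1) :
    ∀ t ∈ Icc a b, ∀ i, lieDeriv V (f i) (γ t) = 0 := by
  have hγU : ∀ t ∈ Icc a b, γ t ∈ U := fun t ht => hLU (hγL t ht)
  have hP : ∀ t ∈ Icc a b, HasDerivWithinAt (fun t i => f i (γ t))
      (fun i => lieDeriv V (f i) (γ t)) (Icc a b) t := fun t ht =>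
    hasDerivWithinAt_pi.2 fun i => (hγ t ht).comp_lieDeriv (hf i _ (hγU t ht)).differentiableAt
  have hQ : ∀ t ∈ Icc a b, HasDerivWithinAt (fun t i => lieDeriv V (f i) (γ t))
      (fun i => ∑ j, A i j (γ t) * f j (γ t) + ∑ j, B i j (γ t) * lieDeriv V (f j) (γ t))
      (Icc a b) t := fun t ht => hasDerivWithinAt_pi.2 fun i => by
    rw [← hAB i _ (hγU t ht)]
    exact (hγ t ht).comp_lieDeriv
      ((hf i _ (hγU t ht)).differentiableAt_lieDeriv (hV _ (hγU t ht)).differentiableAt)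
  have hΘ : ∀ t ∈ Icc a b,
      ‖fun i => ∑ j, A i j (γ t) * f j (γ t) + ∑ j, B i j (γ t) * lieDeriv V (f j) (γ t)‖ ≤
        Fintype.card ι * C * (‖fun i => f i (γ t)‖ + ‖fun i => lieDeriv V (f i) (γ t)‖) :=
    fun t ht => (pi_norm_le_iff_of_nonneg (by positivity)).2 fun i =>
      calc _ ≤ _ := abs_add_le _ _
        _ ≤ _ := add_le_add (abs_sum_mul_le (hA _ (hγL t ht) i))
          (abs_sum_mul_le (hB _ (hγL t ht) i))
        _ = _ := by ring
  intro t ht i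
  exact congrFun (deriv_eqOn_zero_of_second_order_bound hab (by positivity) hP hQ hΘ
    (funext ha) (funext hb) hsmall ht) i

end

/-- **Theorem 1.7.** If the triple `(U, V, X)` is analytically quasi-transverse
(geometrically quasi-transverse and `∂²(𝓘_X) ⊆ ∂(𝓘_X) + 𝓘_X`), then it satisfies the
generalized Flow-Box property. Here `X` is the common zero set of `f₁, …, f_k`, which
locally generate the ideal of `X`. -/
theorem analytic_quasi_transverse_flow_box
    (n k : ℕ)
    (U : Set (Fin n → ℝ)) (hU : IsOpen U)
    (V : (Fin n → ℝ) → (Fin n → ℝ)) (hV : AnalyticOnNhd ℝ V U)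
    (f : Fin k → (Fin n → ℝ) → ℝ) (hf : ∀ i, AnalyticOnNhd ℝ (f i) U)
    (X : Set (Fin n → ℝ)) (hX : X = {q ∈ U | ∀ i, f i q = 0})
    -- (i) `f₁, …, f_k` locally generate the ideal of `X`
    (hgen : ∀ q ∈ X, ∀ W : Set (Fin n → ℝ), IsOpen W → q ∈ W → W ⊆ U →
      ∀ g : (Fin n → ℝ) → ℝ, AnalyticOnNhd ℝ g W → (∀ x ∈ X ∩ W, g x = 0) →
      ∃ (W' : Set (Fin n → ℝ)) (a : Fin k → (Fin n → ℝ) → ℝ),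
        IsOpen W' ∧ q ∈ W' ∧ W' ⊆ W ∧ (∀ i, AnalyticOnNhd ℝ (a i) W') ∧
        (∀ x ∈ W', g x = ∑ i, a i x * f i x))
    -- (ii) geometric quasi-transversality
    (hgqt : ∀ q ∈ X, V q ≠ 0 → ∃ (W : Set (Fin n → ℝ)) (g : (Fin n → ℝ) → ℝ),
      IsOpen W ∧ q ∈ W ∧ W ⊆ U ∧ AnalyticOnNhd ℝ g W ∧
      (X ∩ W ⊆ g ⁻¹' {0}) ∧ fderiv ℝ g q (V q) ≠ 0)
    -- (iii) analytic quasi-transversality: V·(V·fᵢ) = Σⱼ aᵢⱼ fⱼ + Σⱼ bᵢⱼ (V·fⱼ)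
    (haqt : ∃ a b : Fin k → Fin k → (Fin n → ℝ) → ℝ,
      (∀ i j, AnalyticOnNhd ℝ (a i j) U) ∧ (∀ i j, AnalyticOnNhd ℝ (b i j) U) ∧
      ∀ i, ∀ q ∈ U,
        fderiv ℝ (fun x => fderiv ℝ (f i) x (V x)) q (V q) =
          (∑ j, a i j q * f j q) + ∑ j, b i j q * fderiv ℝ (f j) q (V q)) :
    ∀ K ⊆ X, IsCompact K →
      ∃ δ > (0 : ℝ), ∀ p ∈ K, V p ≠ 0 → ∀ (I : Set ℝ) (γ : ℝ → (Fin n → ℝ)),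
        I.OrdConnected → (0 : ℝ) ∈ I → I ⊆ Set.Ioo (-δ) δ →
        (∀ t ∈ I, γ t ∈ U) →
        (∀ t ∈ I, HasDerivWithinAt γ (V (γ t)) I t) →
        γ 0 = p →
        ∀ t ∈ I, t ≠ 0 → γ t ∉ X := by
  obtain ⟨a, b, ha, hb, hab⟩ := haqt
  intro K hKX hK
  have hXU : X ⊆ U := hX ▸ sep_subset U _
  have hfX : ∀ q ∈ X, ∀ i, f i q = 0 := hX ▸ fun q hq => hq.2
  obtain ⟨r, hr, hrU⟩ := hK.exists_cthickening_subset_open hU (hKX.trans hXU)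
  have hL : IsCompact (cthickening r K) := hK.cthickening
  obtain ⟨CV, hCV⟩ := hL.exists_bound_of_continuousOn (hV.continuousOn.mono hrU)
  obtain ⟨C, hC, hCab⟩ := hL.exists_nonneg_forall_abs_le
    (g := Sum.elim (fun ij : Fin k × Fin k => a ij.1 ij.2) fun ij : Fin k × Fin k => b ij.1 ij.2)
    (Sum.forall.2
      ⟨fun _ => (ha _ _).continuousOn.mono hrU, fun _ => (hb _ _).continuousOn.mono hrU⟩)
  obtain ⟨δ, ⟨hδr, hδC⟩, hδ⟩ :
      ∃ δ, ((CV + 1) * δ < r ∧ 2 * (k * C) * (δ + 1) * δ < 1) ∧ 0 < δ := by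
    have : ∀ᶠ δ in 𝓝 (0 : ℝ), (CV + 1) * δ < r ∧ 2 * (k * C) * (δ + 1) * δ < 1 :=
      (ContinuousAt.eventually_lt (by fun_prop) (by fun_prop) (by simpa using hr)).and
        (ContinuousAt.eventually_lt (by fun_prop) (by fun_prop) (by simp))
    exact ((this.filter_mono nhdsWithin_le_nhds).and
      (eventually_mem_nhdsWithin (s := Ioi 0))).exists
  refine ⟨δ, hδ, fun p hpK hVp I γ hI hI0 hIδ _ hγ hγ0 t₀ ht₀ ht₀0 hγt₀ => ?_⟩
  obtain ⟨i, hi⟩ := GeometricallyQuasiTransverse.exists_lieDeriv_ne_zero hgqt hgen hf hXU hfX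
    (hKX hpK) hVp
  have ht₀δ : |t₀| < δ := abs_lt.2 (hIδ ht₀)
  have hJ : uIcc 0 t₀ ⊆ I := hI.uIcc_subset hI0 ht₀
  have hγJ : ∀ t ∈ uIcc 0 t₀, HasDerivWithinAt γ (V (γ t)) (uIcc 0 t₀) t :=
    fun t ht => (hγ t (hJ ht)).mono hJ
  have hzero : ∀ s, s = 0 ∨ s = t₀ → ∀ i, f i (γ s) = 0 := by
    rintro s (rfl | rfl)
    exacts [hγ0 ▸ hfX p (hKX hpK), hfX _ hγt₀]
  refine hi (hγ0 ▸ lieDeriv_comp_eq_zero_of_vanishing_at_ends hV hf hab hrU hC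
    (fun x hx i j => hCab (.inl (i, j)) x hx) (fun x hx i j => hCab (.inr (i, j)) x hx)
    (min_lt_max.2 ht₀0.symm)
    (mem_cthickening_of_hasDerivWithinAt hCV (hγ0 ▸ hpK) hγJ (by nlinarith [abs_nonneg t₀]))
    hγJ (hzero _ (min_choice 0 t₀)) (hzero _ (max_choice 0 t₀)) ?_ 0 left_mem_uIcc i)
  rw [Fintype.card_fin, max_sub_min_eq_abs, sub_zero]
  exact lt_of_le_of_lt (by gcongr) hδC
end

section
/- (Lemma 3.1.) There exist ε > 0 and a real-analytic function U : (−ε, ε) → ℝ with U(0) = √6 / 2 such that for every s ∈ (−ε, ε), the number α = s·U(s) satisfies (1 + s²)·cos(α)·sin(α) − α = 0. -/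
/-!
Write `sin α cos α = α - α³ r(α)` with `r` analytic and `r 0 = 2/3`. With `q = r / (1 - α² r)`
the equation becomes `s² = α² q(α)`, which is solved by inverting the analytic map
`α ↦ α √(q α)`, whose derivative at `0` is `√(2/3) ≠ 0`. The analytic inverse vanishes at `0`,
so it is `s ↦ s U(s)` with `U` analytic and `U 0 = (√(2/3))⁻¹ = √6/2`.
-/

open Filter Topology Real
open scoped ContDiff

section

variable {𝕜 E : Type*} [NontriviallyNormedField 𝕜] [NormedAddCommGroup E] [NormedSpace 𝕜 E]

theorem AnalyticAt.analyticAt_dslope {f : 𝕜 → E} {z₀ : 𝕜} (hf : AnalyticAt 𝕜 f z₀) :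
    AnalyticAt 𝕜 (dslope f z₀) z₀ :=
  let ⟨_, hp⟩ := hf
  hp.has_fpower_series_dslope_fslope.analyticAt

theorem AnalyticAt.exists_eq_sub_pow_smul_of_tendsto {f : 𝕜 → E} {z₀ : 𝕜} {c : E}
    (hf : AnalyticAt 𝕜 f z₀) (n : ℕ)
    (hlim : Tendsto (fun z ↦ ((z - z₀) ^ n)⁻¹ • f z) (𝓝[≠] z₀) (𝓝 c)) :
    ∃ r : 𝕜 → E, AnalyticAt 𝕜 r z₀ ∧ r z₀ = c ∧ ∀ z, f z = (z - z₀) ^ n • r z := by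
  induction n generalizing f with
  | zero =>
    simp only [pow_zero, inv_one, one_smul] at hlim
    exact ⟨f, hf, tendsto_nhds_unique (hf.continuousAt.tendsto.mono_left nhdsWithin_le_nhds) hlim,
      by simp⟩
  | succ n ih =>
    have hpow : Tendsto (fun z ↦ (z - z₀) ^ (n + 1)) (𝓝[≠] z₀) (𝓝 0) := by
      exact ((continuous_sub_right z₀).pow (n + 1)).tendsto' z₀ 0 (by simp)
        |>.mono_left nhdsWithin_le_nhds
    have hf₀ : f z₀ = 0 := by
      refine tendsto_nhds_unique (l := 𝓝[≠] z₀)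
        (hf.continuousAt.tendsto.mono_left nhdsWithin_le_nhds) ?_
      refine (zero_smul 𝕜 c ▸ hpow.smul hlim).congr' ?_
      filter_upwards [self_mem_nhdsWithin] with z hz
      rw [smul_inv_smul₀ (pow_ne_zero _ (sub_ne_zero.2 hz))]
    have hslope (z : 𝕜) : f z = (z - z₀) • dslope f z₀ z := by
      rw [sub_smul_dslope, hf₀, sub_zero]
    obtain ⟨r, hr, hr₀, hfr⟩ := ih hf.analyticAt_dslope <| hlim.congr' <| by
      filter_upwards [self_mem_nhdsWithin] with z hz
      rw [hslope z, smul_smul, pow_succ, mul_inv, mul_assoc,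
        inv_mul_cancel₀ (sub_ne_zero.2 hz), mul_one]
    exact ⟨r, hr, hr₀, fun z ↦ by rw [hslope z, hfr z, smul_smul, ← pow_succ']⟩

theorem AnalyticAt.exists_apply_mul_eq_of_deriv_ne_zero [CompleteSpace 𝕜] [CharZero 𝕜]
    {w : 𝕜 → 𝕜} (hw : AnalyticAt 𝕜 w 0) (hw₀ : w 0 = 0) (hw' : deriv w 0 ≠ 0) :
    ∃ U : 𝕜 → 𝕜, AnalyticAt 𝕜 U 0 ∧ U 0 = (deriv w 0)⁻¹ ∧ ∀ᶠ s in 𝓝 0, w (s * U s) = s := by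
  set v := hw.hasStrictDerivAt.localInverse _ _ _ hw'
  have hv : AnalyticAt 𝕜 v 0 := hw₀ ▸ hw.analyticAt_localInverse hw'
  have hv₀ : v 0 = 0 := by
    simpa [hw₀] using (hw.hasStrictDerivAt.hasStrictFDerivAt_equiv hw').localInverse_apply_image
  have hv' : HasDerivAt v (deriv w 0)⁻¹ 0 := by
    simpa only [hw₀] using (hw.hasStrictDerivAt.to_localInverse hw').hasDerivAt
  have hslope (s : 𝕜) : v s = s * dslope v 0 s := by
    simpa [hv₀] using (sub_smul_dslope v 0 s).symm
  refine ⟨dslope v 0, hv.analyticAt_dslope, by rw [dslope_same, hv'.deriv], ?_⟩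
  have hright : ∀ᶠ s in 𝓝 0, w (v s) = s := by
    simpa only [hw₀] using hw.hasStrictDerivAt.eventually_right_inverse hw'
  filter_upwards [hright] with s hs
  rwa [← hslope]

end

theorem AnalyticAt.exists_eventually_sq_eq_sq_mul {q : ℝ → ℝ} (hq : AnalyticAt ℝ q 0)
    (hq₀ : 0 < q 0) :
    ∃ U : ℝ → ℝ, AnalyticAt ℝ U 0 ∧ U 0 = (√(q 0))⁻¹ ∧
      ∀ᶠ s in 𝓝 0, s ^ 2 = (s * U s) ^ 2 * q (s * U s) := by
  have hsqrt : AnalyticAt ℝ (fun α ↦ √(q α)) 0 :=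
    (contDiffAt_sqrt (n := ω) hq₀.ne').analyticAt.comp hq
  have hwa : AnalyticAt ℝ (fun α ↦ α * √(q α)) 0 := analyticAt_id.fun_mul hsqrt
  have hw : HasDerivAt (fun α ↦ α * √(q α)) (√(q 0)) 0 := by
    simpa using (hasDerivAt_id' 0).fun_mul hsqrt.differentiableAt.hasDerivAt
  obtain ⟨U, hU, hU₀, hinv⟩ := hwa.exists_apply_mul_eq_of_deriv_ne_zero
    (by simp) (by rw [hw.deriv]; positivity)
  refine ⟨U, hU, by rw [hU₀, hw.deriv], ?_⟩
  have hα : Tendsto (fun s ↦ s * U s) (𝓝 0) (𝓝 0) := by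
    simpa using (continuousAt_id.fun_mul hU.continuousAt).tendsto
  filter_upwards [hinv, hα.eventually (hq.continuousAt.eventually (lt_mem_nhds hq₀))]
    with s hs hpos
  calc s ^ 2 = (s * U s * √(q (s * U s))) ^ 2 := by rw [hs]
    _ = (s * U s) ^ 2 * q (s * U s) := by rw [mul_pow, sq_sqrt hpos.le]

theorem abs_sub_sin_mul_cos_sub_le {x : ℝ} (hx : |x| ≤ 1 / 2) :
    |x - sin x * cos x - 2 / 3 * x ^ 3| ≤ 4 / 25 * |x| ^ 5 := by
  have h := sin_bound (x := 2 * x) (by rw [abs_mul, abs_two]; linarith)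
  have heq : x - sin x * cos x - 2 / 3 * x ^ 3 =
      -(sin (2 * x) - (2 * x - (2 * x) ^ 3 / 6)) / 2 := by
    rw [sin_two_mul]; ring
  rw [heq, abs_div, abs_neg, abs_two, div_le_iff₀ two_pos]
  calc _ ≤ |2 * x| ^ 5 / 100 := h
    _ = _ := by rw [abs_mul, abs_two]; ring

theorem tendsto_sub_sin_mul_cos_div_cube :
    Tendsto (fun x : ℝ ↦ (x ^ 3)⁻¹ * (x - sin x * cos x)) (𝓝[≠] 0) (𝓝 (2 / 3)) := by
  rw [← tendsto_sub_nhds_zero_iff]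
  refine squeeze_zero_norm' (a := fun x ↦ 4 / 25 * |x| ^ 2) ?_ ?_
  · filter_upwards [self_mem_nhdsWithin, nhdsWithin_le_nhds
      (eventually_abs_sub_lt 0 (by norm_num : (0 : ℝ) < 1 / 2))] with x (hx : x ≠ 0) hx'
    rw [sub_zero] at hx'
    have hx3 : 0 < |x| ^ 3 := by positivity
    calc ‖(x ^ 3)⁻¹ * (x - sin x * cos x) - 2 / 3‖
        = |x - sin x * cos x - 2 / 3 * x ^ 3| / |x| ^ 3 := by
          rw [norm_eq_abs, ← abs_pow, ← abs_div]; congr 1; field_simp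
      _ ≤ 4 / 25 * |x| ^ 5 / |x| ^ 3 := by gcongr; exact abs_sub_sin_mul_cos_sub_le hx'.le
      _ = 4 / 25 * |x| ^ 2 := by field_simp
  · exact (continuous_const.mul (continuous_abs.pow 2)).tendsto' 0 0 (by simp)
      |>.mono_left nhdsWithin_le_nhds

theorem exists_sin_mul_cos_eq_sub_cube_mul :
    ∃ r : ℝ → ℝ, AnalyticAt ℝ r 0 ∧ r 0 = 2 / 3 ∧ ∀ x, sin x * cos x = x - x ^ 3 * r x := by
  obtain ⟨r, hr, hr₀, hsc⟩ :=
    (show AnalyticAt ℝ (fun x ↦ x - sin x * cos x) 0 by fun_prop).exists_eq_sub_pow_smul_of_tendsto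
      3 (by simpa using tendsto_sub_sin_mul_cos_div_cube)
  refine ⟨r, hr, hr₀, fun x ↦ ?_⟩
  have := hsc x
  rw [sub_zero, smul_eq_mul] at this
  linarith

theorem one_add_sq_mul_cos_mul_sin_sub_eq_zero {r : ℝ → ℝ}
    (hr : ∀ x, sin x * cos x = x - x ^ 3 * r x) {s u : ℝ}
    (h : s ^ 2 = (s * u) ^ 2 * (r (s * u) / (1 - (s * u) ^ 2 * r (s * u)))) :
    (1 + s ^ 2) * cos (s * u) * sin (s * u) - s * u = 0 := by
  set α := s * u
  -- a vanishing denominator would force `s = 0`, hence `α = 0` and denominator `1`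
  have hd : 1 - α ^ 2 * r α ≠ 0 := by
    intro hd
    rw [hd, div_zero, mul_zero, pow_eq_zero_iff two_ne_zero] at h
    simp [α, h] at hd
  have h' : s ^ 2 * (1 - α ^ 2 * r α) = α ^ 2 * r α := by
    rw [h]; field_simp
  rw [mul_assoc, mul_comm (cos α), hr]
  linear_combination α * h'

theorem inv_sqrt_two_div_three : (√(2 / 3))⁻¹ = √6 / 2 := by
  rw [← sqrt_inv, show (2 / 3 : ℝ)⁻¹ = 6 / 2 ^ 2 by norm_num, sqrt_div' _ (by positivity),
    sqrt_sq two_pos.le]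

/-- **Lemma 3.1.** The equation `(1 + s²)·cos α·sin α − α = 0` has an analytic solution
`α = h(s) = s·U(s)` near the origin, with `U(0) = √6 / 2`. -/
theorem exists_analytic_solution_ce :
    ∃ ε > (0 : ℝ), ∃ U : ℝ → ℝ,
      AnalyticOnNhd ℝ U (Set.Ioo (-ε) ε) ∧
      U 0 = Real.sqrt 6 / 2 ∧
      ∀ s ∈ Set.Ioo (-ε) ε,
        (1 + s ^ 2) * Real.cos (s * U s) * Real.sin (s * U s) - s * U s = 0 := by
  obtain ⟨r, hr, hr₀, hsc⟩ := exists_sin_mul_cos_eq_sub_cube_mul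
  set q : ℝ → ℝ := fun α ↦ r α / (1 - α ^ 2 * r α)
  have hq : AnalyticAt ℝ q 0 := hr.div (by fun_prop) (by simp)
  have hq₀ : q 0 = 2 / 3 := by simp [q, hr₀]
  obtain ⟨U, hU, hU₀, hsol⟩ := hq.exists_eventually_sq_eq_sq_mul (by rw [hq₀]; norm_num)
  obtain ⟨ε, hε, hball⟩ := Metric.eventually_nhds_iff_ball.1 (hU.eventually_analyticAt.and hsol)
  simp only [Real.ball_eq_Ioo, zero_sub, zero_add] at hball
  exact ⟨ε, hε, U, fun s hs ↦ (hball s hs).1, by rw [hU₀, hq₀, inv_sqrt_two_div_three],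
    fun s hs ↦ one_add_sq_mul_cos_mul_sin_sub_eq_zero hsc (hball s hs).2⟩
end

section
/- (Root lemma from the proof of Claim 1.) There exist ε > 0 and a real-analytic function V : (−ε, ε) → ℝ with V(0) = √2 / 2 such that for every x ∈ (−ε, ε), the number y = x³·V(x) satisfies 2y² − (x² − y²)·(x² + y²)² = 0. Moreover, there exists ε' > 0 such that every (x, y) ∈ ℝ² with x² + y² < ε'² and 2y² − (x² − y²)·(x² + y²)² = 0 satisfies y = x³·V(x) or y = −x³·V(x). -/
/-!
Substituting `y = x³ v` divides the equation by `x⁶` and leaves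
`F(x, v) = 2v² − (1 − x⁴v²)(1 + x⁴v²)² = 0`, whose slice `x = 0` is `2v² = 1`, with the simple
root `√2 / 2`. The analytic implicit function theorem yields `V` with `F(x, V x) = 0`. Conversely,
a solution `(x, y)` with `x ≠ 0` gives the root `|y / x³|` of `F(x, ·)`, which lies within `x⁴`
of `√2 / 2`; local uniqueness of the implicit function then forces `|y / x³| = V x`.
-/

open Topology ContDiff Filter

theorem ContinuousLinearMap.isInvertible_smulRight_one {𝕜 : Type*} [NontriviallyNormedField 𝕜]
    {d : 𝕜} (hd : d ≠ 0) : (smulRight (1 : 𝕜 →L[𝕜] 𝕜) d).IsInvertible := by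
  refine ⟨ContinuousLinearEquiv.unitsEquivAut 𝕜 (Units.mk0 d hd), ?_⟩
  ext
  simp

theorem isInvertible_fderiv_comp_inr_of_hasDerivAt {𝕜 : Type*} [NontriviallyNormedField 𝕜]
    {E : Type*} [NormedAddCommGroup E] [NormedSpace 𝕜 E] {f : E × 𝕜 → 𝕜} {u : E × 𝕜} {d : 𝕜}
    (hf : DifferentiableAt 𝕜 f u) (hd : HasDerivAt (fun y ↦ f (u.1, y)) d u.2) (hd₀ : d ≠ 0) :
    (fderiv 𝕜 f u ∘L .inr 𝕜 E 𝕜).IsInvertible := by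
  have hpartial : HasFDerivAt (fun y ↦ f (u.1, y)) (fderiv 𝕜 f u ∘L .inr 𝕜 E 𝕜) u.2 :=
    hf.hasFDerivAt.comp u.2 (hasFDerivAt_prodMk_right u.1 u.2)
  rw [hpartial.unique hd.hasFDerivAt]
  exact ContinuousLinearMap.isInvertible_smulRight_one hd₀

theorem ContDiffAt.exists_analyticAt_implicitFunction {𝕜 : Type*} [RCLike 𝕜]
    {E₁ : Type*} [NormedAddCommGroup E₁] [NormedSpace 𝕜 E₁] [CompleteSpace E₁]
    {E₂ : Type*} [NormedAddCommGroup E₂] [NormedSpace 𝕜 E₂] [CompleteSpace E₂]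
    {F : Type*} [NormedAddCommGroup F] [NormedSpace 𝕜 F] [CompleteSpace F]
    {f : E₁ × E₂ → F} {u : E₁ × E₂} (hf : ContDiffAt 𝕜 ω f u)
    (hf₂ : (fderiv 𝕜 f u ∘L .inr 𝕜 E₁ E₂).IsInvertible) :
    ∃ ψ : E₁ → E₂, AnalyticAt 𝕜 ψ u.1 ∧ ψ u.1 = u.2 ∧
      (∀ᶠ x in 𝓝 u.1, f (x, ψ x) = f u) ∧ ∀ᶠ v in 𝓝 u, f v = f u → ψ v.1 = v.2 :=
  ⟨hf.implicitFunction (by simp) hf₂, (hf.contDiffAt_implicitFunction _ hf₂).analyticAt,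
    hf.implicitFunction_apply_self _ hf₂, hf.eventually_apply_implicitFunction _ hf₂,
    (hf.eventually_apply_eq_iff_implicitFunction _ hf₂).mono fun _ h ↦ h.1⟩

theorem sqrt_two_div_two_sq : (√2 / 2) ^ 2 = 1 / 2 := by
  rw [div_pow, Real.sq_sqrt zero_le_two]; norm_num

def reducedEquation (p : ℝ × ℝ) : ℝ :=
  2 * p.2 ^ 2 - (1 - p.1 ^ 4 * p.2 ^ 2) * (1 + p.1 ^ 4 * p.2 ^ 2) ^ 2

theorem curve_eq_pow_six_mul_reducedEquation (x v : ℝ) :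
    2 * (x ^ 3 * v) ^ 2 - (x ^ 2 - (x ^ 3 * v) ^ 2) * (x ^ 2 + (x ^ 3 * v) ^ 2) ^ 2 =
      x ^ 6 * reducedEquation (x, v) := by
  simp only [reducedEquation]; ring

theorem reducedEquation_abs (x v : ℝ) : reducedEquation (x, |v|) = reducedEquation (x, v) := by
  simp only [reducedEquation, sq_abs]

theorem exists_analyticAt_reducedEquation_root :
    ∃ V : ℝ → ℝ, AnalyticAt ℝ V 0 ∧ V 0 = √2 / 2 ∧
      (∀ᶠ x in 𝓝 0, reducedEquation (x, V x) = 0) ∧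
      ∀ᶠ q in 𝓝 ((0 : ℝ), √2 / 2), reducedEquation q = 0 → V q.1 = q.2 := by
  have hroot : reducedEquation (0, √2 / 2) = 0 := by
    simp only [reducedEquation, sqrt_two_div_two_sq]; ring
  have hsmooth : ContDiff ℝ ω reducedEquation := by unfold reducedEquation; fun_prop
  have hslice : (fun v ↦ reducedEquation (0, v)) = fun v ↦ 2 * v ^ 2 - 1 := by
    ext v; simp only [reducedEquation]; ring
  have hpartial : HasDerivAt (fun v ↦ reducedEquation (0, v)) (2 * √2) (√2 / 2) := by
    rw [hslice]
    refine (((hasDerivAt_pow 2 (√2 / 2)).const_mul 2).sub_const 1).congr_deriv ?_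
    norm_num; ring
  have hinv := isInvertible_fderiv_comp_inr_of_hasDerivAt (u := (0, √2 / 2))
    (hsmooth.differentiable (by simp) _) hpartial (by positivity)
  simpa only [hroot] using hsmooth.contDiffAt.exists_analyticAt_implicitFunction hinv

theorem abs_sub_sqrt_two_div_two_le {x v : ℝ} (hv : 0 ≤ v) (h : reducedEquation (x, v) = 0) :
    |v - √2 / 2| ≤ x ^ 4 := by
  set t := x ^ 4 * v ^ 2
  have h2 : 2 * v ^ 2 - 1 = t - t ^ 2 - t ^ 3 := by
    simp only [reducedEquation] at h; linear_combination h
  have ht₀ : 0 ≤ t := by positivity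
  have ht₁ : t < 1 := by
    by_contra! ht₁
    have : v ^ 2 ≤ 0 := by nlinarith [mul_nonneg (sub_nonneg.2 ht₁) (sq_nonneg (1 + t))]
    nlinarith [sq_nonneg x, pow_two_nonneg (x ^ 2)]
  have htx : t ≤ x ^ 4 := by nlinarith [pow_two_nonneg (x ^ 2), pow_nonneg ht₀ 2, pow_nonneg ht₀ 3]
  have hsq : |v ^ 2 - 1 / 2| ≤ x ^ 4 / 2 := by
    rw [abs_le]; constructor <;> nlinarith [pow_nonneg ht₀ 2, pow_nonneg ht₀ 3]
  have hc₀ : 7 / 10 ≤ √2 / 2 := by nlinarith [Real.sqrt_nonneg 2, sqrt_two_div_two_sq]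
  have hfac : |v - √2 / 2| * (v + √2 / 2) = |v ^ 2 - 1 / 2| := by
    rw [← sqrt_two_div_two_sq, ← abs_of_nonneg (by positivity : 0 ≤ v + √2 / 2), ← abs_mul]; ring_nf
  nlinarith [abs_nonneg (v - √2 / 2), pow_two_nonneg (x ^ 2)]

theorem eventually_forall_nonneg_root_eq {V : ℝ → ℝ}
    (hV : ∀ᶠ q in 𝓝 ((0 : ℝ), √2 / 2), reducedEquation q = 0 → V q.1 = q.2) :
    ∀ᶠ x in 𝓝 (0 : ℝ), ∀ v, 0 ≤ v → reducedEquation (x, v) = 0 → V x = v := by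
  obtain ⟨δ, hδ, hball⟩ := Metric.eventually_nhds_iff.1 hV
  have habs : ∀ᶠ x in 𝓝 (0 : ℝ), |x| < δ :=
    (continuous_abs.tendsto' 0 0 abs_zero).eventually (gt_mem_nhds hδ)
  have hpow : ∀ᶠ x in 𝓝 (0 : ℝ), x ^ 4 < δ :=
    ((continuous_pow 4).tendsto' 0 0 (by simp)).eventually (gt_mem_nhds hδ)
  filter_upwards [habs, hpow] with x hx hx4 v hv h
  refine hball ?_ h
  rw [Prod.dist_eq, max_lt_iff, Real.dist_eq, Real.dist_eq, sub_zero]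
  exact ⟨hx, (abs_sub_sqrt_two_div_two_le hv h).trans_lt hx4⟩

theorem eq_or_eq_neg_of_curve_eq_zero {V : ℝ → ℝ} {x y : ℝ}
    (hV : ∀ v, 0 ≤ v → reducedEquation (x, v) = 0 → V x = v)
    (h : 2 * y ^ 2 - (x ^ 2 - y ^ 2) * (x ^ 2 + y ^ 2) ^ 2 = 0) :
    y = x ^ 3 * V x ∨ y = -(x ^ 3 * V x) := by
  rcases eq_or_ne x 0 with rfl | hx
  · have hy : y ^ 2 * (2 + y ^ 4) = 0 := by linear_combination h
    have : y = 0 := pow_eq_zero_iff two_ne_zero |>.1 <|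
      (mul_eq_zero.1 hy).resolve_right (by positivity)
    simp [this]
  · set v := y / x ^ 3
    have hy : y = x ^ 3 * v := by rw [mul_div_cancel₀ _ (pow_ne_zero 3 hx)]
    have hv : reducedEquation (x, |v|) = 0 := by
      have := curve_eq_pow_six_mul_reducedEquation x v
      rw [← hy, h] at this
      rw [reducedEquation_abs]
      exact (mul_eq_zero.1 this.symm).resolve_left (pow_ne_zero 6 hx)
    rw [hV |v| (abs_nonneg v) hv, hy]
    rcases abs_choice v with hsign | hsign <;> rw [hsign] <;> simp

/-- Root lemma from the proof of Claim 1: the equation `2y² − (x² − y²)(x² + y²)² = 0` has,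
near the origin, exactly the solutions `y = ±x³·V(x)` for an analytic unit `V` with
`V(0) = √2 / 2`. -/
theorem root_lemma_claim1 :
    ∃ ε > (0 : ℝ), ∃ V : ℝ → ℝ,
      AnalyticOnNhd ℝ V (Set.Ioo (-ε) ε) ∧
      V 0 = Real.sqrt 2 / 2 ∧
      (∀ x ∈ Set.Ioo (-ε) ε,
        2 * (x ^ 3 * V x) ^ 2
          - (x ^ 2 - (x ^ 3 * V x) ^ 2) * (x ^ 2 + (x ^ 3 * V x) ^ 2) ^ 2 = 0) ∧
      ∃ ε' > (0 : ℝ), ε' ≤ ε ∧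
        ∀ x y : ℝ, x ^ 2 + y ^ 2 < ε' ^ 2 →
          2 * y ^ 2 - (x ^ 2 - y ^ 2) * (x ^ 2 + y ^ 2) ^ 2 = 0 →
          y = x ^ 3 * V x ∨ y = -(x ^ 3 * V x) := by
  obtain ⟨V, hVan, hV0, hVroot, hVuniq⟩ := exists_analyticAt_reducedEquation_root
  obtain ⟨ε, hε, hV⟩ := Metric.eventually_nhds_iff.1 <|
    hVan.eventually_analyticAt.and (hVroot.and (eventually_forall_nonneg_root_eq hVuniq))
  have hIoo : ∀ x ∈ Set.Ioo (-ε) ε, dist x 0 < ε := fun x hx ↦ by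
    rw [Real.dist_0_eq_abs]; exact abs_lt.2 hx
  refine ⟨ε, hε, V, fun x hx ↦ (hV (hIoo x hx)).1, hV0, fun x hx ↦ ?_, ε, hε, le_rfl,
    fun x y hxy h ↦ eq_or_eq_neg_of_curve_eq_zero (hV ?_).2.2 h⟩
  · rw [curve_eq_pow_six_mul_reducedEquation, (hV (hIoo x hx)).2.1, mul_zero]
  · rw [Real.dist_0_eq_abs]
    exact abs_lt_of_sq_lt_sq (by nlinarith [sq_nonneg y]) hε.le
end

section
/- (Claim 1: geometric quasi-transversality of the four-dimensional example.) Let ε₀ > 0 and let U : (−ε₀, ε₀) → ℝ be real-analytic with U(0) = √6 / 2, and set h(s) = s·U(s). Then there exists ε > 0 with ε² ≤ ε₀ such that there is no point (x, y) ∈ ℝ² with 0 < x² + y² < ε² satisfying both 2·x·y·cos(h(x² + y²)) − (x² − y²)·sin(h(x² + y²)) = 0 and 2y² − (x² − y²)·(x² + y²)² = 0. (These two equations express that the vector field V(x, y, z, w) = (−y, x, 0, y²) is tangent at (x, y, f(x,y), g(x,y)) to the surface X = {(x, y, z, w) : z = f(x,y), w = g(x,y)}, where f(x,y) = y²·cos(h(x²+y²))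 − x·y·sin(h(x²+y²)) and g(x,y) = (1/2)·x·y·(x²+y²)²; hence V is tangent to X only at the origin, i.e. the triple is geometrically quasi-transverse.) -/
set_option maxHeartbeats 1600000 in
/-- **Claim 1**: geometric quasi-transversality of the four-dimensional example. With
`h(s) = s·U(s)`, `U(0) = √6/2`, the two tangency equations have no common solution with
`0 < x² + y² < ε²`; hence the vector field `(−y, x, 0, y²)` is tangent to the surface
`{z = f(x,y), w = g(x,y)}` only at the origin. -/
theorem claim1_geometric_quasi_transversality
    (ε₀ : ℝ) (hε₀ : 0 < ε₀)
    (U : ℝ → ℝ) (hU : AnalyticOnNhd ℝ U (Set.Ioo (-ε₀) ε₀))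
    (hU0 : U 0 = Real.sqrt 6 / 2)
    (h : ℝ → ℝ) (hh : ∀ s, h s = s * U s) :
    ∃ ε > (0 : ℝ), ε ^ 2 ≤ ε₀ ∧
      ¬ ∃ x y : ℝ, 0 < x ^ 2 + y ^ 2 ∧ x ^ 2 + y ^ 2 < ε ^ 2 ∧
        2 * x * y * Real.cos (h (x ^ 2 + y ^ 2))
          - (x ^ 2 - y ^ 2) * Real.sin (h (x ^ 2 + y ^ 2)) = 0 ∧
        2 * y ^ 2 - (x ^ 2 - y ^ 2) * (x ^ 2 + y ^ 2) ^ 2 = 0 := by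
  have hUc : ContinuousAt U 0 := (hU 0 ⟨by linarith, hε₀⟩).continuousAt
  obtain ⟨δ, hδpos, hδ⟩ := Metric.continuousAt_iff.mp hUc (1/20) (by norm_num)
  refine ⟨min (Real.sqrt ε₀) (min (Real.sqrt δ) (1/4)),
    lt_min (Real.sqrt_pos.mpr hε₀) (lt_min (Real.sqrt_pos.mpr hδpos) (by norm_num)), ?_, ?_⟩
  · calc (min (Real.sqrt ε₀) (min (Real.sqrt δ) (1/4))) ^ 2
        ≤ (Real.sqrt ε₀) ^ 2 := by
          apply pow_le_pow_left₀ (le_min (Real.sqrt_nonneg _)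
            (le_min (Real.sqrt_nonneg _) (by norm_num))) (min_le_left _ _)
      _ = ε₀ := Real.sq_sqrt hε₀.le
  rintro ⟨x, y, hr0, hrε, heq1, heq2⟩
  set ε := min (Real.sqrt ε₀) (min (Real.sqrt δ) (1/4)) with hε
  set s := x ^ 2 + y ^ 2 with hs
  clear_value s
  have hεδ : ε ^ 2 ≤ δ := by
    calc ε ^ 2 ≤ (Real.sqrt δ) ^ 2 := by
          apply pow_le_pow_left₀ (le_min (Real.sqrt_nonneg _)
            (le_min (Real.sqrt_nonneg _) (by norm_num))) ((min_le_right _ _).trans (min_le_left _ _))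
      _ = δ := Real.sq_sqrt hδpos.le
  have hε4 : ε ^ 2 ≤ 1/16 := by
    calc ε ^ 2 ≤ (1/4 : ℝ) ^ 2 := by
          apply pow_le_pow_left₀ (le_min (Real.sqrt_nonneg _)
            (le_min (Real.sqrt_nonneg _) (by norm_num))) ((min_le_right _ _).trans (min_le_right _ _))
      _ = 1/16 := by norm_num
  have hs16 : s < 1/16 := lt_of_lt_of_le hrε hε4
  have hsδ : s < δ := lt_of_lt_of_le hrε hεδ
  -- bound on U s
  have hUs : |U s - U 0| < 1/20 := by
    have := hδ (show dist s 0 < δ by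
      rw [Real.dist_eq, sub_zero, abs_of_pos hr0]; exact hsδ)
    simpa [Real.dist_eq] using this
  have h6 : Real.sqrt 6 < 49/20 := by
    rw [show (49:ℝ)/20 = Real.sqrt ((49/20)^2) by
      rw [Real.sqrt_sq (by norm_num)]]
    exact Real.sqrt_lt_sqrt (by norm_num) (by norm_num)
  have hUabs : |U s| < 51/40 := by
    have h0 : |U 0| < 49/40 := by
      rw [hU0, abs_of_nonneg (by positivity)]
      linarith
    calc |U s| ≤ |U s - U 0| + |U 0| := by
          simpa using abs_add_le (U s - U 0) (U 0)
      _ < 51/40 := by linarith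
  have hU2 : (U s) ^ 2 ≤ 163/100 := by
    have := sq_abs (U s)
    nlinarith [abs_nonneg (U s)]
  -- trig bounds
  set c := Real.cos (h s) with hc
  set sn := Real.sin (h s) with hsn
  clear_value c sn
  have hsn2 : sn ^ 2 ≤ (163/100) * s ^ 2 := by
    have h1 : sn ^ 2 ≤ (h s) ^ 2 := by rw [hsn]; exact Real.sin_sq_le_sq
    have h2 : (h s) ^ 2 = s ^ 2 * (U s) ^ 2 := by rw [hh]; ring
    nlinarith [sq_nonneg s]
  have hc2 : 1 - (163/100) * s ^ 2 ≤ c ^ 2 := by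
    have hpyth := Real.sin_sq_add_cos_sq (h s)
    rw [← hsn, ← hc] at hpyth
    nlinarith
  -- algebraic facts from the second equation
  have hy2 : 2 * y ^ 2 = (x ^ 2 - y ^ 2) * s ^ 2 := by linarith
  have hd : 0 ≤ x ^ 2 - y ^ 2 := by
    by_contra hneg
    push_neg at hneg
    have hlt : (x ^ 2 - y ^ 2) * s ^ 2 < 0 :=
      mul_neg_of_neg_of_pos (by linarith) (by positivity)
    linarith [sq_nonneg y]
  rcases eq_or_lt_of_le hd with hd0 | hdpos
  · have h0 : (x ^ 2 - y ^ 2) * s ^ 2 = 0 := by rw [← hd0]; ring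
    have hy0 : y ^ 2 = 0 := by linarith
    have hx0 : x ^ 2 = 0 := by linarith
    simp only [hs] at hr0
    linarith
  -- square the first equation
  have key : (2 * x * y * c) ^ 2 = ((x ^ 2 - y ^ 2) * sn) ^ 2 := by
    have : 2 * x * y * c = (x ^ 2 - y ^ 2) * sn := by linarith
    rw [this]
  have key2 : 2 * x ^ 2 * s ^ 2 * c ^ 2 * (x ^ 2 - y ^ 2)
      = (x ^ 2 - y ^ 2) ^ 2 * sn ^ 2 := by linear_combination key - 2*x^2*c^2*hy2
  have key3 : 2 * x ^ 2 * s ^ 2 * c ^ 2 = (x ^ 2 - y ^ 2) * sn ^ 2 := by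
    have := mul_right_cancel₀ (ne_of_gt hdpos)
      (show (2 * x ^ 2 * s ^ 2 * c ^ 2) * (x ^ 2 - y ^ 2)
          = ((x ^ 2 - y ^ 2) * sn ^ 2) * (x ^ 2 - y ^ 2) by linear_combination key2)
    exact this
  -- size estimates
  have hdle : x ^ 2 - y ^ 2 ≤ s := by
    rw [hs]; nlinarith [sq_nonneg y]
  have hy2small : y ^ 2 ≤ s ^ 3 / 2 := by
    nlinarith [mul_le_mul_of_nonneg_right hdle (sq_nonneg s)]
  have hx2 : s - s ^ 3 / 2 ≤ x ^ 2 := by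
    linarith [hy2small, hs.ge, hs.le]
  -- final contradiction
  have hRHS : (x ^ 2 - y ^ 2) * sn ^ 2 ≤ (163/100) * s ^ 3 := by
    nlinarith [sq_nonneg sn, sq_nonneg s, hr0]
  have hLHS : 2 * (s - s ^ 3 / 2) * s ^ 2 * (1 - (163/100) * s ^ 2)
      ≤ 2 * x ^ 2 * s ^ 2 * c ^ 2 := by
    have hx2nn : (0:ℝ) ≤ s - s ^ 3 / 2 := by nlinarith
    have hc2nn : (0:ℝ) ≤ 1 - (163/100) * s ^ 2 := by nlinarith
    nlinarith [mul_le_mul_of_nonneg_left (mul_le_mul hx2 hc2 hc2nn (sq_nonneg x))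
      (show (0:ℝ) ≤ 2 * s ^ 2 by positivity)]
  have hcontr : 2 * (s - s ^ 3 / 2) * s ^ 2 * (1 - (163/100) * s ^ 2)
      ≤ (163/100) * s ^ 3 := by linarith
  have hs3pos : 0 < s ^ 3 := pow_pos hr0 3
  have hs2 : s ^ 2 ≤ 1/256 := by nlinarith
  have h5 : s ^ 5 ≤ s ^ 3 / 256 := by
    nlinarith [mul_le_mul_of_nonneg_left hs2 hs3pos.le]
  nlinarith [pow_nonneg hr0.le 7]
end

section
/- (Claim 2, return identity.) Let ε₀ > 0, let U : (−ε₀, ε₀) → ℝ be real-analytic with U(0) = √6 / 2, set h(s) = s·U(s), and assume (1 + s²)·cos(h(s))·sin(h(s)) = h(s) for all s ∈ (−ε₀, ε₀) (such h exists by the paper's Lemma 3.1). Define f(x,y) = y²·cos(h(x²+y²)) − x·y·sin(h(x²+y²)) and g(x,y) = (1/2)·x·y·(x²+y²)² for x²+y² < ε₀. Then for every r₀ with 0 < r₀² < ε₀, setting t₀ = h(r₀²), one has: f(r₀, 0) = 0 and g(r₀, 0) = 0; f(r₀·cos t₀, r₀·sin t₀) = 0 and g(r₀·cos t₀, r₀·sin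 t₀) = (r₀²/4)·(2t₀ − sin(2t₀)); moreover t₀ > 0 for all sufficiently small r₀ > 0, and t₀ → 0 as r₀ → 0⁺. (Hence the orbit of the vector field (−y, x, 0, y²) through (r₀, 0, 0, 0) meets the surface {z = f(x,y), w = g(x,y)} at times 0 and t₀.) -/
/-!
The first three identities are immediate once one notes that `(r cos t, r sin t)` stays on the
circle of radius `r`; for the value of `g`, the equation `(1 + r⁴) cos t sin t = t` satisfied by
`t = h(r²)` replaces `r⁴ cos t sin t` by `t - cos t sin t`. Positivity and smallness of `t₀`
come from `h(s) = s U(s)` with `U` continuous at `0` and `U(0) = √6 / 2 > 0`.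
-/

open Real Filter Topology

lemma sq_mul_cos_add_sq_mul_sin (r t : ℝ) : (r * cos t) ^ 2 + (r * sin t) ^ 2 = r ^ 2 := by
  rw [mul_pow, mul_pow, ← mul_add, cos_sq_add_sin_sq, mul_one]

lemma half_mul_polar_eq_of_fixed_point {r t : ℝ} (ht : (1 + (r ^ 2) ^ 2) * cos t * sin t = t) :
    1 / 2 * (r * cos t) * (r * sin t) * (r ^ 2) ^ 2 = r ^ 2 / 4 * (2 * t - sin (2 * t)) := by
  rw [sin_two_mul]
  linear_combination r ^ 2 / 2 * ht

lemma tendsto_sq_nhdsGT_zero : Tendsto (fun r : ℝ => r ^ 2) (𝓝[>] 0) (𝓝[>] 0) :=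
  tendsto_nhdsWithin_of_tendsto_nhds_of_eventually_within _
    ((continuous_pow 2).tendsto' 0 0 (zero_pow two_ne_zero) |>.mono_left nhdsWithin_le_nhds)
    (eventually_nhdsWithin_of_forall fun _ hr => pow_pos (Set.mem_Ioi.mp hr) 2)

section MulSelfApply

variable {U : ℝ → ℝ}

lemma tendsto_mul_self_apply_nhds_zero (hU : ContinuousAt U 0) :
    Tendsto (fun s => s * U s) (𝓝 0) (𝓝 0) := by
  simpa using tendsto_id.mul hU.tendsto

lemma eventually_pos_mul_self_apply (hU : ContinuousAt U 0) (hU0 : 0 < U 0) :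
    ∀ᶠ s in 𝓝[>] 0, 0 < s * U s := by
  filter_upwards [self_mem_nhdsWithin, nhdsWithin_le_nhds (hU.eventually (eventually_gt_nhds hU0))]
    with s hs hUs
  exact mul_pos hs hUs

end MulSelfApply

/-- **Claim 2**, return identity: the orbit of `(−y, x, 0, y²)` through `(r₀, 0, 0, 0)`
meets the surface `{z = f(x,y), w = g(x,y)}` again at time `t₀ = h(r₀²)`, a positive time
which tends to `0` as `r₀ → 0⁺`. -/
theorem claim2_return_identity
    (ε₀ : ℝ) (hε₀ : 0 < ε₀)
    (U : ℝ → ℝ) (hU : AnalyticOnNhd ℝ U (Set.Ioo (-ε₀) ε₀))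
    (hU0 : U 0 = Real.sqrt 6 / 2)
    (h : ℝ → ℝ) (hh : ∀ s, h s = s * U s)
    (hsol : ∀ s ∈ Set.Ioo (-ε₀) ε₀, (1 + s ^ 2) * cos (h s) * sin (h s) = h s)
    (f g : ℝ → ℝ → ℝ)
    (hf : ∀ x y : ℝ, x ^ 2 + y ^ 2 < ε₀ →
      f x y = y ^ 2 * cos (h (x ^ 2 + y ^ 2)) - x * y * sin (h (x ^ 2 + y ^ 2)))
    (hg : ∀ x y : ℝ, x ^ 2 + y ^ 2 < ε₀ →
      g x y = (1 / 2) * x * y * (x ^ 2 + y ^ 2) ^ 2) :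
    (∀ r₀ : ℝ, 0 < r₀ → r₀ ^ 2 < ε₀ →
      f r₀ 0 = 0 ∧ g r₀ 0 = 0 ∧
      f (r₀ * cos (h (r₀ ^ 2))) (r₀ * sin (h (r₀ ^ 2))) = 0 ∧
      g (r₀ * cos (h (r₀ ^ 2))) (r₀ * sin (h (r₀ ^ 2)))
        = (r₀ ^ 2 / 4) * (2 * h (r₀ ^ 2) - sin (2 * h (r₀ ^ 2)))) ∧
    (∃ r₁ > (0 : ℝ), ∀ r₀ : ℝ, 0 < r₀ → r₀ < r₁ → 0 < h (r₀ ^ 2)) ∧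
    Filter.Tendsto (fun r₀ : ℝ => h (r₀ ^ 2)) (nhdsWithin 0 (Set.Ioi 0)) (nhds 0) := by
  have hUc : ContinuousAt U 0 := (hU 0 ⟨neg_lt_zero.mpr hε₀, hε₀⟩).continuousAt
  have hUpos : 0 < U 0 := hU0 ▸ by positivity
  refine ⟨fun r₀ hr₀ hr₀ε => ?_, ?_, ?_⟩
  · set t := h (r₀ ^ 2)
    have hr₀ε' : r₀ ^ 2 + 0 ^ 2 < ε₀ := by simpa using hr₀ε
    have hcircle := sq_mul_cos_add_sq_mul_sin r₀ t
    have hfixed := hsol (r₀ ^ 2) ⟨by linarith [sq_nonneg r₀], hr₀ε⟩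
    refine ⟨?_, ?_, ?_, ?_⟩
    · rw [hf _ _ hr₀ε']; ring
    · rw [hg _ _ hr₀ε']; ring
    · rw [hf _ _ (hcircle ▸ hr₀ε), hcircle]; ring
    · rw [hg _ _ (hcircle ▸ hr₀ε), hcircle]
      exact half_mul_polar_eq_of_fixed_point hfixed
  · have hh_pos : ∀ᶠ s in 𝓝[>] 0, 0 < h s :=
      funext hh ▸ eventually_pos_mul_self_apply hUc hUpos
    obtain ⟨r₁, hr₁, hpos⟩ := (nhdsGT_basis (0 : ℝ)).eventually_iff.mp
      (tendsto_sq_nhdsGT_zero.eventually hh_pos)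
    exact ⟨r₁, hr₁, fun r₀ hr₀ hr₀r₁ => hpos ⟨hr₀, hr₀r₁⟩⟩
  · have hh_lim : Tendsto h (𝓝 0) (𝓝 0) := funext hh ▸ tendsto_mul_self_apply_nhds_zero hUc
    exact hh_lim.comp (tendsto_sq_nhdsGT_zero.mono_right nhdsWithin_le_nhds)
end

section
/- (Theorem 1.5(b).) There exist an open neighborhood M ⊆ ℝ⁴ of the origin, a real-analytic vector field V : M → ℝ⁴, an open set Ω ⊆ ℝ² and a real-analytic map φ = (φ₁, φ₂) : Ω → ℝ² with X := {(x, y, φ₁(x,y), φ₂(x,y)) : (x,y) ∈ Ω} ⊆ M (so X is a non-singular two-dimensional analytic submanifold of M), such that: (i) the triple (M, V, X) is geometrically quasi-transverse: for every q ∈ X with V(q) ≠ 0 there exist an open neighborhood W ⊆ M of q and a real-analytic f : W → ℝ such that X ∩ W ⊆ f⁻¹(0) and (fderiv f q)(V(q)) ≠ 0; and (ii) the generalized Flow-Box property fails: there exists a compact set K ⊆ X such that for every δ > 0 there exist a point p ∈ K with V(p) ≠ 0, a time t with 0 < t < δ, and an integral curve γ : [0, t] → M of V with γ(0) = p and γ(t)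 ∈ X. -/
/-!
Take `V(x, y, z, w) = (-y, x, y, x³ - y²)` and `X = {z = w = 0}`. Along `X` the normal
component `(y, x³ - y²)` of `V` vanishes only where `V` does, so the linear function
`(z, w) ↦ y z + (x³ - y²) w` witnesses quasi-transversality at every non-singular point.
The flow rotates `(x, y)` rigidly, so `z` returns to `0` along any arc symmetric about the
`x`-axis, while `w` gains `∫ r³ cos³ - r² sin²`. For the arc of angle `2u` the two terms
balance at a radius `r ≈ u² / 3`, so orbits through points of a fixed compact piece of `X`
leave `X` and come back to it in arbitrarily short time.
-/

open Real Set

noncomputable section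

namespace QuasiTransverseFlowBox

@[fun_prop]
lemma analyticAt_apply {𝕜 ι E : Type*} [NontriviallyNormedField 𝕜] [Fintype ι]
    [NormedAddCommGroup E] [NormedSpace 𝕜 E] (i : ι) (x : ι → E) :
    AnalyticAt 𝕜 (fun q : ι → E => q i) x :=
  (ContinuousLinearMap.proj i : (ι → E) →L[𝕜] E).analyticAt x

def field (q : Fin 4 → ℝ) : Fin 4 → ℝ := ![-q 1, q 0, q 1, q 0 ^ 3 - q 1 ^ 2]

def plane (p : ℝ × ℝ) : Fin 4 → ℝ := ![p.1, p.2, 0, 0]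

lemma analyticOnNhd_field : AnalyticOnNhd ℝ field univ :=
  analyticOnNhd_pi_iff.2 fun i x _ => by fin_cases i <;> simp [field] <;> fun_prop

lemma continuous_plane : Continuous plane :=
  continuous_pi fun i => by fin_cases i <;> simp [plane] <;> fun_prop

def normalFunctional (a b : ℝ) : (Fin 4 → ℝ) →L[ℝ] ℝ :=
  a • ContinuousLinearMap.proj 2 + b • ContinuousLinearMap.proj 3

lemma normalFunctional_plane (a b : ℝ) (p : ℝ × ℝ) : normalFunctional a b (plane p) = 0 := by
  simp [normalFunctional, plane]

lemma normalFunctional_apply (a b : ℝ) (v : Fin 4 → ℝ) :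
    normalFunctional a b v = a * v 2 + b * v 3 := by
  simp [normalFunctional]

lemma field_plane_normal_ne_zero {p : ℝ × ℝ} (hp : field (plane p) ≠ 0) :
    field (plane p) 2 ^ 2 + field (plane p) 3 ^ 2 ≠ 0 := by
  contrapose! hp
  have hy : p.2 = 0 := by simp [field, plane] at hp; nlinarith
  have hx : p.1 = 0 := by simpa [field, plane, hy] using hp
  ext i
  fin_cases i <;> simp [field, plane, hx, hy]

lemma field_plane_ne_zero {p : ℝ × ℝ} (hp : p.2 ≠ 0) : field (plane p) ≠ 0 :=
  fun h => hp (by simpa [field, plane] using congrFun h 0)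

lemma exists_normalFunctional_ne_zero {p : ℝ × ℝ} (hp : field (plane p) ≠ 0) :
    ∃ a b : ℝ, normalFunctional a b (field (plane p)) ≠ 0 := by
  refine ⟨field (plane p) 2, field (plane p) 3, ?_⟩
  rw [normalFunctional_apply, ← sq, ← sq]
  exact field_plane_normal_ne_zero hp

def cosCubePrimitive (u : ℝ) : ℝ := sin u - sin u ^ 3 / 3

def sinSqPrimitive (u : ℝ) : ℝ := (2 * u - sin (2 * u)) / 4

lemma hasDerivAt_cosCubePrimitive (u : ℝ) :
    HasDerivAt cosCubePrimitive (cos u ^ 3) u := by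
  refine ((hasDerivAt_sin u).sub (((hasDerivAt_sin u).pow 3).div_const 3)).congr_deriv ?_
  simp only [Nat.cast_ofNat]
  linear_combination -cos u * sin_sq_add_cos_sq u

lemma hasDerivAt_sinSqPrimitive (u : ℝ) :
    HasDerivAt sinSqPrimitive (sin u ^ 2) u := by
  have h2 : HasDerivAt (fun u : ℝ => 2 * u) 2 u := by simpa using (hasDerivAt_id u).const_mul 2
  refine (h2.sub h2.sin).div_const 4 |>.congr_deriv ?_
  rw [sin_sq_eq_half_sub]
  ring

lemma cosCubePrimitive_neg (u : ℝ) : cosCubePrimitive (-u) = -cosCubePrimitive u := by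
  simp only [cosCubePrimitive, sin_neg]; ring

lemma sinSqPrimitive_neg (u : ℝ) : sinSqPrimitive (-u) = -sinSqPrimitive u := by
  simp only [sinSqPrimitive, mul_neg, sin_neg]; ring

def arc (r θ s : ℝ) : Fin 4 → ℝ :=
  ![r * cos (θ + s), r * sin (θ + s), r * (cos θ - cos (θ + s)),
    r ^ 3 * (cosCubePrimitive (θ + s) - cosCubePrimitive θ)
      - r ^ 2 * (sinSqPrimitive (θ + s) - sinSqPrimitive θ)]

lemma hasDerivAt_arc (r θ s : ℝ) : HasDerivAt (arc r θ) (field (arc r θ s)) s := by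
  have hθ : HasDerivAt (fun s => θ + s) 1 s := (hasDerivAt_id s).const_add θ
  refine hasDerivAt_pi.2 fun i => ?_
  fin_cases i
  · simpa [arc, field] using hθ.cos.const_mul r
  · simpa [arc, field] using hθ.sin.const_mul r
  · simpa [arc, field] using (hθ.cos.const_sub (cos θ)).const_mul r
  · refine (((((hasDerivAt_cosCubePrimitive _).comp s hθ).sub_const _).const_mul (r ^ 3)).sub
      ((((hasDerivAt_sinSqPrimitive _).comp s hθ).sub_const _).const_mul (r ^ 2))).congr_deriv ?_
    simp [arc, field]
    ring

lemma arc_zero (r θ : ℝ) : arc r θ 0 = plane (r * cos θ, r * sin θ) := by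
  ext i
  fin_cases i <;> simp [arc, plane]

/-- By symmetry `z` returns to `0` along the arc from angle `-u` to `u`, and `w` does when the
gain `2 r³ ∫₀ᵘ cos³` balances the loss `2 r² ∫₀ᵘ sin²`. -/
lemma arc_neg_two_mul {r u : ℝ} (h : r * cosCubePrimitive u = sinSqPrimitive u) :
    arc r (-u) (2 * u) = plane (r * cos u, r * sin u) := by
  have hu : -u + 2 * u = u := by ring
  ext i
  fin_cases i <;> simp [arc, plane, hu, cosCubePrimitive_neg, sinSqPrimitive_neg]
  linear_combination 2 * r ^ 2 * h

lemma exists_radius {u : ℝ} (hu0 : 0 < u) (hu1 : u ≤ 1) :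
    ∃ r, 0 < r ∧ r ≤ 1 ∧ r * cosCubePrimitive u = sinSqPrimitive u := by
  have hsin_pos : 0 < sin u := sin_pos_of_pos_of_lt_pi hu0 (by linarith [pi_gt_three])
  have hsin_gt : u - u ^ 3 / 6 < sin u := sin_gt_sub_cube hu0
  have hsin2_lt : sin (2 * u) < 2 * u := sin_lt (by positivity)
  have hsin2_gt : 2 * u - (2 * u) ^ 3 / 6 < sin (2 * u) := sin_gt_sub_cube (by positivity)
  have hcube : sin u ^ 3 ≤ sin u := by
    nlinarith [sin_le_one u, sq_nonneg (sin u), mul_pos hsin_pos hsin_pos]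
  have hC : 0 < cosCubePrimitive u := by unfold cosCubePrimitive; linarith
  have hS : 0 < sinSqPrimitive u := by unfold sinSqPrimitive; linarith
  -- `∫₀ᵘ sin² ≤ u³ / 3` while `∫₀ᵘ cos³ ≥ 2 sin u / 3 > 2 (u - u³ / 6) / 3`.
  have hSC : sinSqPrimitive u ≤ cosCubePrimitive u := by
    unfold sinSqPrimitive cosCubePrimitive
    nlinarith [pow_le_of_le_one hu0.le hu1 (by norm_num : 3 ≠ 0)]
  refine ⟨sinSqPrimitive u / cosCubePrimitive u, div_pos hS hC, (div_le_one hC).2 hSC, ?_⟩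
  exact div_mul_cancel₀ _ hC.ne'

lemma norm_polar_le {r : ℝ} (hr : 0 ≤ r) (θ : ℝ) : ‖(r * cos θ, r * sin θ)‖ ≤ r :=
  norm_prod_le_iff.2
    ⟨by simpa [abs_mul, abs_of_nonneg hr] using mul_le_of_le_one_right hr (abs_cos_le_one θ),
      by simpa [abs_mul, abs_of_nonneg hr] using mul_le_of_le_one_right hr (abs_sin_le_one θ)⟩

end QuasiTransverseFlowBox

end

open QuasiTransverseFlowBox in
/-- **Theorem 1.5(b).** There is a geometrically quasi-transverse triple `(M, V, X)` in
dimension `4`, with `X` a non-singular two-dimensional analytic graph, which does not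
satisfy the generalized Flow-Box property. -/
theorem exists_quasi_transverse_without_flow_box :
    ∃ (M : Set (Fin 4 → ℝ)) (V : (Fin 4 → ℝ) → (Fin 4 → ℝ))
      (Ω : Set (ℝ × ℝ)) (φ₁ φ₂ : ℝ × ℝ → ℝ) (X : Set (Fin 4 → ℝ)),
      IsOpen M ∧ (0 : Fin 4 → ℝ) ∈ M ∧
      AnalyticOnNhd ℝ V M ∧
      IsOpen Ω ∧
      AnalyticOnNhd ℝ φ₁ Ω ∧ AnalyticOnNhd ℝ φ₂ Ω ∧
      X = (fun p : ℝ × ℝ => ![p.1, p.2, φ₁ p, φ₂ p]) '' Ω ∧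
      X ⊆ M ∧
      -- (i) geometric quasi-transversality
      (∀ q ∈ X, V q ≠ 0 → ∃ (W : Set (Fin 4 → ℝ)) (f : (Fin 4 → ℝ) → ℝ),
        IsOpen W ∧ q ∈ W ∧ W ⊆ M ∧ AnalyticOnNhd ℝ f W ∧
        (X ∩ W ⊆ f ⁻¹' {0}) ∧ fderiv ℝ f q (V q) ≠ 0) ∧
      -- (ii) failure of the generalized Flow-Box property
      (∃ K : Set (Fin 4 → ℝ), K ⊆ X ∧ IsCompact K ∧
        ∀ δ > (0 : ℝ), ∃ p ∈ K, V p ≠ 0 ∧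
          ∃ t : ℝ, 0 < t ∧ t < δ ∧
            ∃ γ : ℝ → (Fin 4 → ℝ),
              γ 0 = p ∧
              (∀ s ∈ Set.Icc 0 t, γ s ∈ M) ∧
              (∀ s ∈ Set.Icc 0 t, HasDerivWithinAt γ (V (γ s)) (Set.Icc 0 t) s) ∧
              γ t ∈ X) := by
  refine ⟨univ, field, univ, fun _ => 0, fun _ => 0, plane '' univ, isOpen_univ, trivial,
    analyticOnNhd_field, isOpen_univ, analyticOnNhd_const, analyticOnNhd_const, rfl,
    subset_univ _, ?_, plane '' Metric.closedBall 0 1, image_mono (subset_univ _),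
    (isCompact_closedBall 0 1).image continuous_plane, fun δ hδ => ?_⟩
  · rintro q ⟨p, -, rfl⟩ hq
    obtain ⟨a, b, hab⟩ := exists_normalFunctional_ne_zero hq
    refine ⟨univ, normalFunctional a b, isOpen_univ, trivial, subset_rfl,
      (normalFunctional a b).analyticOnNhd univ, ?_, by rwa [ContinuousLinearMap.fderiv]⟩
    rintro _ ⟨⟨p', -, rfl⟩, -⟩
    exact normalFunctional_plane a b p'
  · obtain ⟨u, hu0, hu1, huδ⟩ : ∃ u : ℝ, 0 < u ∧ u ≤ 1 ∧ 2 * u < δ :=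
      ⟨min δ 1 / 4, by positivity, by linarith [min_le_right δ 1], by linarith [min_le_left δ 1]⟩
    obtain ⟨r, hr0, hr1, hr⟩ := exists_radius hu0 hu1
    have hsin : sin (-u) ≠ 0 :=
      sin_neg u ▸ neg_ne_zero.2 (sin_pos_of_pos_of_lt_pi hu0 (by linarith [pi_gt_three])).ne'
    refine ⟨plane (r * cos (-u), r * sin (-u)),
      mem_image_of_mem _ (mem_closedBall_zero_iff.2 ((norm_polar_le hr0.le _).trans hr1)),
      field_plane_ne_zero (mul_ne_zero hr0.ne' hsin), 2 * u, by positivity, huδ, arc r (-u),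
      arc_zero r (-u), fun _ _ => trivial, fun s _ => (hasDerivAt_arc r (-u) s).hasDerivWithinAt,
      arc_neg_two_mul hr ▸ mem_image_of_mem _ trivial⟩
end

section
/- (Core of Lemma 4.3: comparison of the sub-Riemannian sup-norms associated to two generating families.) Let U ⊆ ℝⁿ be open, let ∂₁, …, ∂_r : U → ℝⁿ and ∂̃₁, …, ∂̃_s : U → ℝⁿ be continuous vector fields, and let a_{ij} : U → ℝ (1 ≤ i ≤ r, 1 ≤ j ≤ s) be continuous functions with ∂ᵢ(q) = Σ_{j=1}^{s} a_{ij}(q)·∂̃ⱼ(q) for all q ∈ U and all i. For q ∈ U and v in the linear span of {∂₁(q), …, ∂_r(q)} define N(v, q) = inf{ max_{1 ≤ i ≤ r} |uᵢ| : u ∈ ℝ^r, Σᵢ uᵢ·∂ᵢ(q) = v }, and for v in the span of {∂̃₁(q), …, ∂̃_s(q)} define Ñ(v, q) = inf{ max_{1 ≤ j ≤ s} |uⱼ| : u ∈ ℝ^s, Σⱼ uⱼ·∂̃ⱼ(q) = v }. Then for every compact set K ⊆ U there exists C > 0 such that for every q ∈ K and every v in the span of {∂₁(q), …, ∂_r(q)}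 (which is automatically in the span of {∂̃₁(q), …, ∂̃_s(q)}), one has Ñ(v, q) ≤ C·N(v, q). -/
/-- Sub-Riemannian sup-norm associated to a generating family of vector fields
`D₁, …, D_r`: for `v` in the span of `D₁(q), …, D_r(q)`,
`N(v, q) = inf { maxᵢ |uᵢ| : Σᵢ uᵢ Dᵢ(q) = v }`. -/
noncomputable def subRiemSupNorm {n r : ℕ} (D : Fin r → (Fin n → ℝ) → (Fin n → ℝ))
    (v : Fin n → ℝ) (q : Fin n → ℝ) : ℝ :=
  sInf {c : ℝ | ∃ u : Fin r → ℝ, (∑ i, u i • D i q) = v ∧ c = ⨆ i, |u i|}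

/-- Core of **Lemma 4.3**: if each `∂ᵢ` is a continuous combination `Σⱼ aᵢⱼ ∂̃ⱼ` of the
`∂̃ⱼ`'s, then on every compact set the sup-norm `Ñ` associated to `∂̃₁, …, ∂̃_s` is bounded
by a constant multiple of the sup-norm `N` associated to `∂₁, …, ∂_r`, for vectors in the
span of the `∂ᵢ(q)`. -/
theorem subRiemSupNorm_comparison
    (n r s : ℕ)
    (U : Set (Fin n → ℝ)) (hU : IsOpen U)
    (D : Fin r → (Fin n → ℝ) → (Fin n → ℝ)) (hD : ∀ i, ContinuousOn (D i) U)
    (Dt : Fin s → (Fin n → ℝ) → (Fin n → ℝ)) (hDt : ∀ j, ContinuousOn (Dt j) U)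
    (a : Fin r → Fin s → (Fin n → ℝ) → ℝ) (ha : ∀ i j, ContinuousOn (a i j) U)
    (hcomb : ∀ q ∈ U, ∀ i, D i q = ∑ j, a i j q • Dt j q) :
    ∀ K ⊆ U, IsCompact K →
      ∃ C > (0 : ℝ), ∀ q ∈ K,
        ∀ v ∈ Submodule.span ℝ (Set.range fun i => D i q),
          subRiemSupNorm Dt v q ≤ C * subRiemSupNorm D v q := by
  intro K hKU hK
  -- bound the coefficients on K
  obtain ⟨M, hM⟩ : ∃ M : ℝ, ∀ q ∈ K, ∀ i j, |a i j q| ≤ M := by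
    obtain ⟨M, hM⟩ := hK.exists_bound_of_continuousOn
      (f := fun q => fun p : Fin r × Fin s => a p.1 p.2 q)
      (by
        apply continuousOn_pi.2
        intro p
        exact (ha p.1 p.2).mono hKU)
    refine ⟨M, fun q hq i j => ?_⟩
    calc |a i j q| = ‖(fun p : Fin r × Fin s => a p.1 p.2 q) (i, j)‖ := rfl
      _ ≤ ‖fun p : Fin r × Fin s => a p.1 p.2 q‖ := norm_le_pi_norm (fun p : Fin r × Fin s => a p.1 p.2 q) (i, j)
      _ ≤ M := hM q hq
  set M' : ℝ := |M| + 1 with hM'def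
  have hM'pos : 0 < M' := by positivity
  have hM' : ∀ q ∈ K, ∀ i j, |a i j q| ≤ M' := fun q hq i j =>
    (hM q hq i j).trans (by simp [hM'def]; linarith [abs_nonneg M, le_abs_self M])
  refine ⟨r * M' + 1, by positivity, fun q hq v hv => ?_⟩
  have hqU : q ∈ U := hKU hq
  set C : ℝ := r * M' + 1 with hCdef
  have hCpos : (0:ℝ) < C := by positivity
  -- bounded below facts
  have hbdd : BddBelow {c : ℝ | ∃ u : Fin s → ℝ, (∑ j, u j • Dt j q) = v ∧ c = ⨆ j, |u j|} := by
    refine ⟨0, fun c hc => ?_⟩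
    obtain ⟨u, -, rfl⟩ := hc
    exact Real.iSup_nonneg fun j => abs_nonneg _
  -- main estimate: for every representation u of v w.r.t. D, Ñ ≤ C * (⨆ |u i|)
  have key : ∀ c ∈ {c : ℝ | ∃ u : Fin r → ℝ, (∑ i, u i • D i q) = v ∧ c = ⨆ i, |u i|},
      subRiemSupNorm Dt v q ≤ C * c := by
    rintro c ⟨u, hu, rfl⟩
    set c := ⨆ i, |u i| with hc
    have hc0 : 0 ≤ c := Real.iSup_nonneg fun i => abs_nonneg _
    have huc : ∀ i, |u i| ≤ c := fun i => le_ciSup (f := fun i => |u i|) (Set.Finite.bddAbove (Set.finite_range _)) i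
    set w : Fin s → ℝ := fun j => ∑ i, u i * a i j q with hw
    have hsum : (∑ j, w j • Dt j q) = v := by
      calc ∑ j, w j • Dt j q = ∑ j, ∑ i, (u i * a i j q) • Dt j q := by
            simp [hw, Finset.sum_smul]
        _ = ∑ i, ∑ j, (u i * a i j q) • Dt j q := Finset.sum_comm
        _ = ∑ i, u i • D i q := by
            refine Finset.sum_congr rfl fun i _ => ?_
            rw [hcomb q hqU i, Finset.smul_sum]
            simp [smul_smul]
        _ = v := hu
    have hle : subRiemSupNorm Dt v q ≤ ⨆ j, |w j| :=
      csInf_le hbdd ⟨w, hsum, rfl⟩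
    refine hle.trans ?_
    have hwj : ∀ j, |w j| ≤ C * c := by
      intro j
      calc |w j| ≤ ∑ i, |u i * a i j q| := Finset.abs_sum_le_sum_abs _ _
        _ ≤ ∑ _i : Fin r, c * M' := by
            refine Finset.sum_le_sum fun i _ => ?_
            rw [abs_mul]
            exact mul_le_mul (huc i) (hM' q hq i j) (abs_nonneg _) hc0
        _ = r * M' * c := by simp [Finset.sum_const]; ring
        _ ≤ C * c := by
            have : (r:ℝ) * M' ≤ C := by rw [hCdef]; linarith
            exact mul_le_mul_of_nonneg_right this hc0
    rcases isEmpty_or_nonempty (Fin s) with hs | hs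
    · simpa [Real.iSup_of_isEmpty] using by positivity
    · exact ciSup_le hwj
  -- conclude via sInf
  rw [Submodule.mem_span_range_iff_exists_fun ℝ] at hv
  obtain ⟨u, hu⟩ := hv
  have hne : {c : ℝ | ∃ u : Fin r → ℝ, (∑ i, u i • D i q) = v ∧ c = ⨆ i, |u i|}.Nonempty :=
    ⟨_, u, hu, rfl⟩
  have : subRiemSupNorm Dt v q / C ≤ subRiemSupNorm D v q := by
    refine le_csInf hne fun b hb => ?_
    rw [div_le_iff₀ hCpos]
    calc subRiemSupNorm Dt v q ≤ C * b := key b hb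
      _ = b * C := mul_comm _ _
  calc subRiemSupNorm Dt v q = C * (subRiemSupNorm Dt v q / C) := by
        field_simp
    _ ≤ C * subRiemSupNorm D v q := mul_le_mul_of_nonneg_left this hCpos.le
end
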